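/- arXiv:1305.1590 — 5 statements merged into one kernel-verified Lean document; each statement's English description precedes it below -/
import Mathlib

section
/- A nondegenerate polyhedron with exactly three quadrilateral faces and two triangular faces has 9 edges, 6 vertices, every vertex of degree 3, and its two triangular faces are disjoint (share no vertex); hence it is a combinatorial triangular prism. -/
/-- An abstract (nondegenerate) combinatorial polyhedron: finite sets of vertices,
edges and faces with the usual incidence axioms. Every edge has two endpoints and
lies on exactly two faces, two distinct faces share at most one edge, each face is
a polygon (as many vertices as edges, at least 3), every vertex has degree at least
3 (nondegeneracy), and Euler's formula `V - E + F = 2` holds. -/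
structure CombPolyhedron where
  Vertex : Type
  Edge : Type
  Face : Type
  [vertexFintype : Fintype Vertex]
  [edgeFintype : Fintype Edge]
  [faceFintype : Fintype Face]
  [edgeDecEq : DecidableEq Edge]
  endpoints : Edge → Finset Vertex
  edgeFaces : Edge → Finset Face
  faceEdges : Face → Finset Edge
  faceVerts : Face → Finset Vertex
  vertexEdges : Vertex → Finset Edge
  endpoints_card : ∀ e, (endpoints e).card = 2
  edgeFaces_card : ∀ e, (edgeFaces e).card = 2
  edge_face_incidence : ∀ e f, f ∈ edgeFaces e ↔ e ∈ faceEdges f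
  vertex_edge_incidence : ∀ v e, v ∈ endpoints e ↔ e ∈ vertexEdges v
  faces_share_at_most_one_edge : ∀ f g : Face, f ≠ g → (faceEdges f ∩ faceEdges g).card ≤ 1
  faceVerts_card : ∀ f, (faceVerts f).card = (faceEdges f).card
  face_three_edges : ∀ f, 3 ≤ (faceEdges f).card
  edge_verts_subset_face : ∀ e f, e ∈ faceEdges f → endpoints e ⊆ faceVerts f
  vertex_degree_ge_three : ∀ v, 3 ≤ (vertexEdges v).card
  euler : (Fintype.card Vertex : ℤ) - Fintype.card Edge + Fintype.card Face = 2

attribute [instance] CombPolyhedron.vertexFintype CombPolyhedron.edgeFintype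
  CombPolyhedron.faceFintype CombPolyhedron.edgeDecEq

/-- `P` is a combinatorial triangular prism: five faces, two disjoint triangles and
three quadrilaterals. -/
def CombPolyhedron.IsCombTriangularPrism (P : CombPolyhedron) : Prop :=
  Fintype.card P.Face = 5 ∧
    ∃ t₁ t₂ : P.Face, t₁ ≠ t₂ ∧ (P.faceEdges t₁).card = 3 ∧ (P.faceEdges t₂).card = 3 ∧
      Disjoint (P.faceVerts t₁) (P.faceVerts t₂) ∧
      ∀ f, f ≠ t₁ → f ≠ t₂ → (P.faceEdges f).card = 4

/-- `P` is a combinatorial quadrilateral pyramid: five faces, a quadrilateral base and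
four triangles all containing a common apex vertex not on the base. -/
def CombPolyhedron.IsCombQuadPyramid (P : CombPolyhedron) : Prop :=
  Fintype.card P.Face = 5 ∧
    ∃ (b : P.Face) (apex : P.Vertex), (P.faceEdges b).card = 4 ∧ apex ∉ P.faceVerts b ∧
      ∀ f, f ≠ b → (P.faceEdges f).card = 3 ∧ apex ∈ P.faceVerts f


open Finset

lemma two_elt {α : Type*} {s : Finset α} (h : s.card = 2) {x : α} (hx : x ∈ s) :
    ∃ y, y ≠ x ∧ y ∈ s ∧ ∀ z ∈ s, z = x ∨ z = y := by
  classical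
  obtain ⟨a, b, hab, rfl⟩ := Finset.card_eq_two.mp h
  simp only [mem_insert, mem_singleton] at hx
  rcases hx with rfl|rfl
  · exact ⟨b, hab.symm, by simp, by simp +contextual [or_comm]⟩
  · exact ⟨a, hab, by simp, by simp +contextual [or_comm]⟩

lemma double_count {α β : Type*} [Fintype α] [Fintype β] (R : α → β → Prop)
    [∀ a b, Decidable (R a b)] :
    ∑ a : α, (univ.filter (fun b => R a b)).card
      = ∑ b : β, (univ.filter (fun a => R a b)).card := by
  simp only [Finset.card_filter]
  exact Finset.sum_comm

namespace CombPolyhedron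
variable (P : CombPolyhedron)

lemma no_two_shared {f g : P.Face} (hfg : f ≠ g) {e1 e2 : P.Edge} (h12 : e1 ≠ e2)
    (h1f : e1 ∈ P.faceEdges f) (h1g : e1 ∈ P.faceEdges g)
    (h2f : e2 ∈ P.faceEdges f) (h2g : e2 ∈ P.faceEdges g) : False := by
  have h := P.faces_share_at_most_one_edge f g hfg
  have hsub : ({e1, e2} : Finset P.Edge) ⊆ P.faceEdges f ∩ P.faceEdges g := by
    intro z hz
    simp only [mem_insert, mem_singleton] at hz
    rcases hz with rfl|rfl <;> simp_all [Finset.mem_inter]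
  have hc := Finset.card_le_card hsub
  rw [Finset.card_insert_of_notMem (by simp [h12])] at hc
  simp at hc
  omega

open Classical in
noncomputable def facesAt (v : P.Vertex) : Finset P.Face :=
  univ.filter (fun f => ∃ e ∈ P.vertexEdges v, e ∈ P.faceEdges f)

open Classical in
noncomputable def incVerts (f : P.Face) : Finset P.Vertex :=
  univ.filter (fun v => ∃ e ∈ P.vertexEdges v, e ∈ P.faceEdges f)

lemma mem_facesAt {v : P.Vertex} {f : P.Face} :
    f ∈ P.facesAt v ↔ ∃ e ∈ P.vertexEdges v, e ∈ P.faceEdges f := by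
  simp [facesAt]

lemma mem_incVerts {v : P.Vertex} {f : P.Face} :
    v ∈ P.incVerts f ↔ ∃ e ∈ P.vertexEdges v, e ∈ P.faceEdges f := by
  simp [incVerts]

lemma incVerts_subset (f : P.Face) : P.incVerts f ⊆ P.faceVerts f := by
  intro v hv
  obtain ⟨e, he, hef⟩ := (P.mem_incVerts).mp hv
  exact P.edge_verts_subset_face e f hef ((P.vertex_edge_incidence v e).mpr he)

lemma edgeFaces_subset_facesAt {v : P.Vertex} {e : P.Edge} (he : e ∈ P.vertexEdges v) :
    P.edgeFaces e ⊆ P.facesAt v := by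
  intro f hf
  exact P.mem_facesAt.mpr ⟨e, he, (P.edge_face_incidence e f).mp hf⟩

lemma sum_facesAt_eq : ∑ v : P.Vertex, (P.facesAt v).card
    = ∑ f : P.Face, (P.incVerts f).card := by
  classical
  unfold facesAt incVerts
  rw [double_count (fun (v : P.Vertex) (f : P.Face) => ∃ e ∈ P.vertexEdges v, e ∈ P.faceEdges f)]

end CombPolyhedron

/-- A nondegenerate polyhedron with exactly three quadrilateral faces and
two triangular faces has 9 edges, 6 vertices, every vertex of degree 3, and its two
triangular faces are disjoint; hence it is a combinatorial triangular prism. -/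
theorem three_quads_two_triangles_is_prism (P : CombPolyhedron)
    (hF : Fintype.card P.Face = 5)
    (hquad : (Finset.univ.filter fun f : P.Face => (P.faceEdges f).card = 4).card = 3)
    (htri : (Finset.univ.filter fun f : P.Face => (P.faceEdges f).card = 3).card = 2) :
    Fintype.card P.Edge = 9 ∧ Fintype.card P.Vertex = 6 ∧
      (∀ v : P.Vertex, (P.vertexEdges v).card = 3) ∧
      (∀ f g : P.Face, f ≠ g → (P.faceEdges f).card = 3 → (P.faceEdges g).card = 3 →
        Disjoint (P.faceVerts f) (P.faceVerts g)) ∧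
      P.IsCombTriangularPrism := by
  classical
  -- every face is a triangle or a quad
  have hdisj : Disjoint (univ.filter fun f : P.Face => (P.faceEdges f).card = 4)
      (univ.filter fun f : P.Face => (P.faceEdges f).card = 3) := by
    rw [Finset.disjoint_left]
    intro f hf hg
    simp only [mem_filter] at hf hg
    omega
  have hunion : (univ.filter fun f : P.Face => (P.faceEdges f).card = 4)
      ∪ (univ.filter fun f : P.Face => (P.faceEdges f).card = 3) = univ := by
    apply Finset.eq_univ_of_card
    rw [Finset.card_union_of_disjoint hdisj, hquad, htri, hF]
  have face34 : ∀ f : P.Face, (P.faceEdges f).card = 4 ∨ (P.faceEdges f).card = 3 := by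
    intro f
    have : f ∈ (univ.filter fun f : P.Face => (P.faceEdges f).card = 4)
        ∪ (univ.filter fun f : P.Face => (P.faceEdges f).card = 3) := by
      rw [hunion]; exact mem_univ f
    simp only [mem_union, mem_filter] at this
    tauto
  -- sum of face degrees is 18
  have hsumF : ∑ f : P.Face, (P.faceEdges f).card = 18 := by
    rw [← hunion, Finset.sum_union hdisj]
    have h4 : ∑ f ∈ (univ.filter fun f : P.Face => (P.faceEdges f).card = 4),
        (P.faceEdges f).card = 12 := by
      rw [Finset.sum_congr rfl (fun f hf => (mem_filter.mp hf).2), Finset.sum_const, hquad]; rfl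
    have h3 : ∑ f ∈ (univ.filter fun f : P.Face => (P.faceEdges f).card = 3),
        (P.faceEdges f).card = 6 := by
      rw [Finset.sum_congr rfl (fun f hf => (mem_filter.mp hf).2), Finset.sum_const, htri]; rfl
    omega
  -- 9 edges
  have hsumE : ∑ e : P.Edge, (P.edgeFaces e).card = 18 := by
    have h1 : ∀ f : P.Face, P.faceEdges f = univ.filter (fun e => e ∈ P.faceEdges f) := by
      intro f; ext e; simp
    have h2 : ∀ e : P.Edge, P.edgeFaces e = univ.filter (fun f => e ∈ P.faceEdges f) := by
      intro e; ext f; simp [P.edge_face_incidence]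
    calc ∑ e : P.Edge, (P.edgeFaces e).card
        = ∑ e : P.Edge, (univ.filter (fun f => e ∈ P.faceEdges f)).card := by
          simp only [← h2]
      _ = ∑ f : P.Face, (univ.filter (fun e => e ∈ P.faceEdges f)).card :=
          (double_count (fun (e : P.Edge) (f : P.Face) => e ∈ P.faceEdges f)).symm ▸ rfl
      _ = 18 := by rw [← hsumF]; exact Finset.sum_congr rfl fun f _ => by rw [← h1]
  have hE : Fintype.card P.Edge = 9 := by
    have : ∑ e : P.Edge, (P.edgeFaces e).card = ∑ e : P.Edge, 2 :=
      Finset.sum_congr rfl fun e _ => P.edgeFaces_card e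
    rw [this, Finset.sum_const, smul_eq_mul, Finset.card_univ] at hsumE
    omega
  have hV : Fintype.card P.Vertex = 6 := by
    have h := P.euler
    rw [hE, hF] at h
    push_cast at h
    omega
  -- sum of vertex degrees is 18
  have hsumV : ∑ v : P.Vertex, (P.vertexEdges v).card = 18 := by
    have h1 : ∀ v : P.Vertex, P.vertexEdges v = univ.filter (fun e => v ∈ P.endpoints e) := by
      intro v; ext e; simp [P.vertex_edge_incidence]
    have h2 : ∀ e : P.Edge, P.endpoints e = univ.filter (fun v => v ∈ P.endpoints e) := by
      intro e; ext v; simp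
    calc ∑ v : P.Vertex, (P.vertexEdges v).card
        = ∑ v : P.Vertex, (univ.filter (fun e => v ∈ P.endpoints e)).card := by
          simp only [← h1]
      _ = ∑ e : P.Edge, (univ.filter (fun v => v ∈ P.endpoints e)).card :=
          double_count (fun (v : P.Vertex) (e : P.Edge) => v ∈ P.endpoints e)
      _ = ∑ e : P.Edge, (P.endpoints e).card := Finset.sum_congr rfl fun e _ => by rw [← h2]
      _ = ∑ e : P.Edge, 2 := Finset.sum_congr rfl fun e _ => P.endpoints_card e
      _ = 18 := by rw [Finset.sum_const, smul_eq_mul, Finset.card_univ, hE]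
  -- every vertex has degree exactly 3
  have hdeg : ∀ v : P.Vertex, (P.vertexEdges v).card = 3 := by
    intro v
    by_contra hne
    have h4 : 4 ≤ (P.vertexEdges v).card := by
      have := P.vertex_degree_ge_three v; omega
    have hsplit : (P.vertexEdges v).card + ∑ u ∈ univ.erase v, (P.vertexEdges u).card = 18 := by
      have h := Finset.add_sum_erase univ (fun u => (P.vertexEdges u).card) (mem_univ v)
      simpa [hsumV] using h
    have hlow : ∑ u ∈ univ.erase v, 3 ≤ ∑ u ∈ univ.erase v, (P.vertexEdges u).card :=
      Finset.sum_le_sum fun u _ => P.vertex_degree_ge_three u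
    rw [Finset.sum_const, Finset.card_erase_of_mem (mem_univ v), Finset.card_univ, hV,
      smul_eq_mul] at hlow
    omega
  -- every vertex is incident to at least 3 faces
  have hfa3 : ∀ v : P.Vertex, 3 ≤ (P.facesAt v).card := by
    intro v
    by_contra hlt
    push_neg at hlt
    -- all edges at v have the same set of 2 faces
    have hall : ∀ e ∈ P.vertexEdges v, P.edgeFaces e = P.facesAt v := by
      intro e he
      apply Finset.eq_of_subset_of_card_le (P.edgeFaces_subset_facesAt he)
      rw [P.edgeFaces_card e]; omega
    obtain ⟨a, b, c, hab, hac, hbc, hvE⟩ := Finset.card_eq_three.mp (hdeg v)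
    have ha : a ∈ P.vertexEdges v := by rw [hvE]; simp
    have hb : b ∈ P.vertexEdges v := by rw [hvE]; simp
    have hfa2 : (P.facesAt v).card = 2 := by rw [← hall a ha, P.edgeFaces_card]
    obtain ⟨f, g, hfg, hfa⟩ := Finset.card_eq_two.mp hfa2
    have haf : a ∈ P.faceEdges f := by
      have : f ∈ P.edgeFaces a := by rw [hall a ha, hfa]; simp
      exact (P.edge_face_incidence a f).mp this
    have hag : a ∈ P.faceEdges g := by
      have : g ∈ P.edgeFaces a := by rw [hall a ha, hfa]; simp
      exact (P.edge_face_incidence a g).mp this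
    have hbf : b ∈ P.faceEdges f := by
      have : f ∈ P.edgeFaces b := by rw [hall b hb, hfa]; simp
      exact (P.edge_face_incidence b f).mp this
    have hbg : b ∈ P.faceEdges g := by
      have : g ∈ P.edgeFaces b := by rw [hall b hb, hfa]; simp
      exact (P.edge_face_incidence b g).mp this
    exact P.no_two_shared hfg hab haf hag hbf hbg
  -- the global equality chain
  have hchain : ∑ v : P.Vertex, (P.facesAt v).card ≤ 18 := by
    calc ∑ v : P.Vertex, (P.facesAt v).card = ∑ f : P.Face, (P.incVerts f).card :=
          P.sum_facesAt_eq
      _ ≤ ∑ f : P.Face, (P.faceVerts f).card :=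
          Finset.sum_le_sum fun f _ => Finset.card_le_card (P.incVerts_subset f)
      _ = ∑ f : P.Face, (P.faceEdges f).card :=
          Finset.sum_congr rfl fun f _ => P.faceVerts_card f
      _ = 18 := hsumF
  have hsumFA : ∑ v : P.Vertex, (P.facesAt v).card = 18 := by
    have : (18 : ℕ) = ∑ _v : P.Vertex, 3 := by
      rw [Finset.sum_const, Finset.card_univ, hV]; rfl
    have hge : 18 ≤ ∑ v : P.Vertex, (P.facesAt v).card := by
      rw [this]; exact Finset.sum_le_sum fun v _ => hfa3 v
    omega
  have hfaCard : ∀ v : P.Vertex, (P.facesAt v).card = 3 := by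
    have h3 : ∑ _v : P.Vertex, 3 = ∑ v : P.Vertex, (P.facesAt v).card := by
      rw [hsumFA, Finset.sum_const, Finset.card_univ, hV]; rfl
    intro v
    exact ((Finset.sum_eq_sum_iff_of_le fun u _ => hfa3 u).mp h3 v (mem_univ v)).symm
  -- incVerts = faceVerts
  have hIV : ∀ f : P.Face, P.incVerts f = P.faceVerts f := by
    have hsumI : ∑ f : P.Face, (P.incVerts f).card = ∑ f : P.Face, (P.faceVerts f).card := by
      rw [← P.sum_facesAt_eq, hsumFA]
      rw [show (∑ f : P.Face, (P.faceVerts f).card) = 18 from by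
        rw [Finset.sum_congr rfl fun f _ => P.faceVerts_card f]; exact hsumF]
    have hc := (Finset.sum_eq_sum_iff_of_le
      (fun f _ => Finset.card_le_card (P.incVerts_subset f))).mp hsumI
    intro f
    exact Finset.eq_of_subset_of_card_le (P.incVerts_subset f)
      (le_of_eq (hc f (mem_univ f)).symm)
  -- each face incident to v contains exactly two of the edges at v
  have hd2 : ∀ (v : P.Vertex) (f : P.Face), f ∈ P.facesAt v →
      ((P.vertexEdges v).filter (fun e => e ∈ P.faceEdges f)).card = 2 := by
    intro v f hf
    set t := (P.vertexEdges v).filter (fun e => e ∈ P.faceEdges f) with ht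
    have htsub : t ⊆ P.vertexEdges v := Finset.filter_subset _ _
    have htle : t.card ≤ 3 := by rw [← hdeg v]; exact Finset.card_le_card htsub
    have htge : 1 ≤ t.card := by
      obtain ⟨e, he, hef⟩ := P.mem_facesAt.mp hf
      exact Finset.card_pos.mpr ⟨e, Finset.mem_filter.mpr ⟨he, hef⟩⟩
    have hne3 : t.card ≠ 3 := by
      intro h3
      have hteq : t = P.vertexEdges v :=
        Finset.eq_of_subset_of_card_le htsub (by rw [h3, hdeg v])
      obtain ⟨a, b, c, hab, hac, hbc, hvE⟩ := Finset.card_eq_three.mp (hdeg v)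
      -- each of a,b,c lies in faceEdges f and has another face
      have hmem : ∀ e ∈ P.vertexEdges v, e ∈ P.faceEdges f := by
        intro e he
        rw [← hteq] at he
        exact (Finset.mem_filter.mp he).2
      have hother : ∀ e ∈ P.vertexEdges v, ∃ g, g ≠ f ∧ g ∈ P.edgeFaces e := by
        intro e he
        obtain ⟨g, hgf, hg, _⟩ := two_elt (P.edgeFaces_card e)
          ((P.edge_face_incidence e f).mpr (hmem e he))
        exact ⟨g, hgf, hg⟩
      have ha : a ∈ P.vertexEdges v := by rw [hvE]; simp
      have hb : b ∈ P.vertexEdges v := by rw [hvE]; simp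
      have hc : c ∈ P.vertexEdges v := by rw [hvE]; simp
      obtain ⟨ga, hgaf, hga⟩ := hother a ha
      obtain ⟨gb, hgbf, hgb⟩ := hother b hb
      obtain ⟨gc, hgcf, hgc⟩ := hother c hc
      have hgagb : ga ≠ gb := by
        rintro rfl
        exact P.no_two_shared hgaf hab ((P.edge_face_incidence a ga).mp hga)
          (hmem a ha) ((P.edge_face_incidence b ga).mp hgb) (hmem b hb)
      have hgagc : ga ≠ gc := by
        rintro rfl
        exact P.no_two_shared hgaf hac ((P.edge_face_incidence a ga).mp hga)
          (hmem a ha) ((P.edge_face_incidence c ga).mp hgc) (hmem c hc)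
      have hgbgc : gb ≠ gc := by
        rintro rfl
        exact P.no_two_shared hgbf hbc ((P.edge_face_incidence b gb).mp hgb)
          (hmem b hb) ((P.edge_face_incidence c gb).mp hgc) (hmem c hc)
      have hsub4 : ({f, ga, gb, gc} : Finset P.Face) ⊆ P.facesAt v := by
        intro z hz
        simp only [mem_insert, mem_singleton] at hz
        rcases hz with rfl|rfl|rfl|rfl
        · exact hf
        · exact P.edgeFaces_subset_facesAt ha hga
        · exact P.edgeFaces_subset_facesAt hb hgb
        · exact P.edgeFaces_subset_facesAt hc hgc
      have hcard4 : ({f, ga, gb, gc} : Finset P.Face).card = 4 := by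
        rw [Finset.card_insert_of_notMem (by simp [Ne.symm hgaf, Ne.symm hgbf, Ne.symm hgcf]),
          Finset.card_insert_of_notMem (by simp [hgagb, hgagc]),
          Finset.card_insert_of_notMem (by simp [hgbgc]), Finset.card_singleton]
      have := Finset.card_le_card hsub4
      rw [hcard4, hfaCard v] at this
      omega
    have hne1 : t.card ≠ 1 := by
      intro h1
      -- the two edges at v not on f share the same two other faces
      have hu : ((P.vertexEdges v) \ t).card = 2 := by
        rw [Finset.card_sdiff_of_subset htsub, hdeg v, h1]
      obtain ⟨b, c, hbc, huE⟩ := Finset.card_eq_two.mp hu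
      have hbmem : b ∈ P.vertexEdges v \ t := by rw [huE]; simp
      have hcmem : c ∈ P.vertexEdges v \ t := by rw [huE]; simp
      have hface : ∀ e ∈ P.vertexEdges v \ t, P.edgeFaces e = (P.facesAt v).erase f := by
        intro e he
        obtain ⟨hev, het⟩ := Finset.mem_sdiff.mp he
        apply Finset.eq_of_subset_of_card_le
        · intro g hg
          refine Finset.mem_erase.mpr ⟨?_, P.edgeFaces_subset_facesAt hev hg⟩
          rintro rfl
          exact het (Finset.mem_filter.mpr ⟨hev, (P.edge_face_incidence e g).mp hg⟩)
        · rw [Finset.card_erase_of_mem hf, hfaCard v, P.edgeFaces_card]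
      have hbface := hface b hbmem
      have hcface := hface c hcmem
      have h2 : ((P.facesAt v).erase f).card = 2 := by
        rw [Finset.card_erase_of_mem hf, hfaCard v]
      obtain ⟨g, h, hgh, herase⟩ := Finset.card_eq_two.mp h2
      have hbg : b ∈ P.faceEdges g := (P.edge_face_incidence b g).mp
        (by rw [hbface, herase]; simp)
      have hbh : b ∈ P.faceEdges h := (P.edge_face_incidence b h).mp
        (by rw [hbface, herase]; simp)
      have hcg : c ∈ P.faceEdges g := (P.edge_face_incidence c g).mp
        (by rw [hcface, herase]; simp)
      have hch : c ∈ P.faceEdges h := (P.edge_face_incidence c h).mp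
        (by rw [hcface, herase]; simp)
      exact P.no_two_shared hgh hbc hbg hbh hcg hch
    omega
  -- membership characterization of faceVerts
  have hmemFV : ∀ (f : P.Face) (u : P.Vertex), u ∈ P.faceVerts f ↔
      ∃ e ∈ P.faceEdges f, u ∈ P.endpoints e := by
    intro f u
    rw [← hIV f, P.mem_incVerts]
    constructor
    · rintro ⟨e, he, hef⟩; exact ⟨e, hef, (P.vertex_edge_incidence u e).mpr he⟩
    · rintro ⟨e, hef, hue⟩; exact ⟨e, (P.vertex_edge_incidence u e).mp hue, hef⟩
  -- the two triangles are vertex-disjoint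
  have hdisjTri : ∀ t₁ t₂ : P.Face, t₁ ≠ t₂ → (P.faceEdges t₁).card = 3 →
      (P.faceEdges t₂).card = 3 →
      ∀ v : P.Vertex, v ∈ P.faceVerts t₁ → v ∈ P.faceVerts t₂ → False := by
    intro t₁ t₂ ht12 h31 h32 v hv1 hv2
    -- the only triangles are t₁ and t₂
    have honly : ∀ f : P.Face, (P.faceEdges f).card = 3 → f = t₁ ∨ f = t₂ := by
      intro f hf3
      have hsub : ({t₁, t₂} : Finset P.Face) ⊆
          univ.filter (fun f : P.Face => (P.faceEdges f).card = 3) := by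
        intro z hz
        simp only [mem_insert, mem_singleton] at hz
        rcases hz with rfl|rfl <;> simp [mem_filter, h31, h32]
      have heq : ({t₁, t₂} : Finset P.Face) =
          univ.filter (fun f : P.Face => (P.faceEdges f).card = 3) :=
        Finset.eq_of_subset_of_card_le hsub (by rw [htri, Finset.card_insert_of_notMem
          (by simp [ht12]), Finset.card_singleton])
      have : f ∈ ({t₁, t₂} : Finset P.Face) := by
        rw [heq]; simp [mem_filter, hf3]
      simpa using this
    have hin1 : t₁ ∈ P.facesAt v := by
      have hv : v ∈ P.incVerts t₁ := by rw [hIV]; exact hv1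
      exact P.mem_facesAt.mpr (P.mem_incVerts.mp hv)
    have hin2 : t₂ ∈ P.facesAt v := by
      have hv : v ∈ P.incVerts t₂ := by rw [hIV]; exact hv2
      exact P.mem_facesAt.mpr (P.mem_incVerts.mp hv)
    set s₁ := (P.vertexEdges v).filter (fun e => e ∈ P.faceEdges t₁) with hs₁def
    set s₂ := (P.vertexEdges v).filter (fun e => e ∈ P.faceEdges t₂) with hs₂def
    have hs₁ : s₁.card = 2 := hd2 v t₁ hin1
    have hs₂ : s₂.card = 2 := hd2 v t₂ hin2
    have hinter : (s₁ ∩ s₂).card ≤ 1 := by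
      refine le_trans (Finset.card_le_card ?_) (P.faces_share_at_most_one_edge t₁ t₂ ht12)
      intro e he
      rw [Finset.mem_inter] at he ⊢
      rw [hs₁def, hs₂def] at he
      simp only [mem_filter] at he
      exact ⟨he.1.2, he.2.2⟩
    have hunion3 : (s₁ ∪ s₂).card ≤ 3 := by
      rw [← hdeg v]
      exact Finset.card_le_card (Finset.union_subset (Finset.filter_subset _ _)
        (Finset.filter_subset _ _))
    have hie := Finset.card_union_add_card_inter s₁ s₂
    have hint1 : (s₁ ∩ s₂).card = 1 := by omega
    obtain ⟨b, hbint⟩ := Finset.card_eq_one.mp hint1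
    have hbs₁ : b ∈ s₁ := by
      have hb : b ∈ s₁ ∩ s₂ := by rw [hbint]; simp
      exact (Finset.mem_inter.mp hb).1
    have hbs₂ : b ∈ s₂ := by
      have hb : b ∈ s₁ ∩ s₂ := by rw [hbint]; simp
      exact (Finset.mem_inter.mp hb).2
    obtain ⟨a, hab, has₁, hspec₁⟩ := two_elt hs₁ hbs₁
    obtain ⟨c, hcb, hcs₂, hspec₂⟩ := two_elt hs₂ hbs₂
    have has₂ : a ∉ s₂ := by
      intro h
      have : a ∈ s₁ ∩ s₂ := Finset.mem_inter.mpr ⟨has₁, h⟩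
      rw [hbint] at this
      exact hab (by simpa using this)
    have hcs₁ : c ∉ s₁ := by
      intro h
      have : c ∈ s₁ ∩ s₂ := Finset.mem_inter.mpr ⟨h, hcs₂⟩
      rw [hbint] at this
      exact hcb (by simpa using this)
    have hac : a ≠ c := fun h => has₂ (h ▸ hcs₂)
    have haV : a ∈ P.vertexEdges v := (Finset.mem_filter.mp has₁).1
    have hbV : b ∈ P.vertexEdges v := (Finset.mem_filter.mp hbs₁).1
    have hcV : c ∈ P.vertexEdges v := (Finset.mem_filter.mp hcs₂).1
    have haf1 : a ∈ P.faceEdges t₁ := (Finset.mem_filter.mp has₁).2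
    have hbf1 : b ∈ P.faceEdges t₁ := (Finset.mem_filter.mp hbs₁).2
    have hbf2 : b ∈ P.faceEdges t₂ := (Finset.mem_filter.mp hbs₂).2
    have hcf2 : c ∈ P.faceEdges t₂ := (Finset.mem_filter.mp hcs₂).2
    have haf2 : a ∉ P.faceEdges t₂ := fun h => has₂ (Finset.mem_filter.mpr ⟨haV, h⟩)
    have hcf1 : c ∉ P.faceEdges t₁ := fun h => hcs₁ (Finset.mem_filter.mpr ⟨hcV, h⟩)
    -- the third face at v
    obtain ⟨f₃, hf₃t₁, hf₃a, hspecA⟩ := two_elt (P.edgeFaces_card a)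
      ((P.edge_face_incidence a t₁).mpr haf1)
    have haf3 : a ∈ P.faceEdges f₃ := (P.edge_face_incidence a f₃).mp hf₃a
    have hf₃t₂ : f₃ ≠ t₂ := by rintro rfl; exact haf2 haf3
    obtain ⟨f₃', hf₃'t₂, hf₃'c, hspecC⟩ := two_elt (P.edgeFaces_card c)
      ((P.edge_face_incidence c t₂).mpr hcf2)
    have hcf3' : c ∈ P.faceEdges f₃' := (P.edge_face_incidence c f₃').mp hf₃'c
    have hf₃'t₁ : f₃' ≠ t₁ := by rintro rfl; exact hcf1 hcf3'
    have hf₃eq : f₃' = f₃ := by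
      by_contra hne
      have hsub : ({t₁, t₂, f₃, f₃'} : Finset P.Face) ⊆ P.facesAt v := by
        intro z hz
        simp only [mem_insert, mem_singleton] at hz
        rcases hz with rfl|rfl|rfl|rfl
        · exact hin1
        · exact hin2
        · exact P.mem_facesAt.mpr ⟨a, haV, haf3⟩
        · exact P.mem_facesAt.mpr ⟨c, hcV, hcf3'⟩
      have hcard : ({t₁, t₂, f₃, f₃'} : Finset P.Face).card = 4 := by
        rw [Finset.card_insert_of_notMem (by simp [ht12, Ne.symm hf₃t₁, Ne.symm hf₃'t₁]),
          Finset.card_insert_of_notMem (by simp [Ne.symm hf₃t₂, Ne.symm hf₃'t₂]),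
          Finset.card_insert_of_notMem (by simp only [Finset.mem_singleton]; exact fun h => hne h.symm),
          Finset.card_singleton]
      have := Finset.card_le_card hsub
      rw [hcard, hfaCard v] at this
      omega
    rw [hf₃eq] at hcf3' hf₃'t₂ hf₃'t₁ hf₃'c hspecC
    -- the third edge x of t₁
    have habsub : ({a, b} : Finset P.Edge) ⊆ P.faceEdges t₁ := by
      intro z hz
      simp only [mem_insert, mem_singleton] at hz
      rcases hz with rfl|rfl
      · exact haf1
      · exact hbf1
    obtain ⟨x, hxmem⟩ : (P.faceEdges t₁ \ {a, b}).Nonempty := by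
      rw [← Finset.card_pos, Finset.card_sdiff_of_subset habsub, h31, Finset.card_insert_of_notMem
        (by simp [hab]), Finset.card_singleton]
      omega
    obtain ⟨hxf1, hxab⟩ := Finset.mem_sdiff.mp hxmem
    have hxa : x ≠ a := fun h => hxab (by simp [h])
    have hxb : x ≠ b := fun h => hxab (by simp [h])
    have hft₁ : P.faceEdges t₁ = {a, b, x} := by
      symm
      apply Finset.eq_of_subset_of_card_le
      · intro z hz
        simp only [mem_insert, mem_singleton] at hz
        rcases hz with rfl|rfl|rfl
        · exact haf1
        · exact hbf1
        · exact hxf1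
      · rw [h31, Finset.card_insert_of_notMem (by simp [hab, Ne.symm hxa]),
          Finset.card_insert_of_notMem (by simp [Ne.symm hxb]), Finset.card_singleton]
    have hxV : x ∉ P.vertexEdges v := by
      intro h
      have hx : x ∈ s₁ := Finset.mem_filter.mpr ⟨h, hxf1⟩
      rcases hspec₁ x hx with h'|h'
      · exact hxb h'
      · exact hxa h'
    have hvx : v ∉ P.endpoints x := fun h => hxV ((P.vertex_edge_incidence v x).mp h)
    -- the third edge y of t₂
    have hbcsub : ({b, c} : Finset P.Edge) ⊆ P.faceEdges t₂ := by
      intro z hz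
      simp only [mem_insert, mem_singleton] at hz
      rcases hz with rfl|rfl
      · exact hbf2
      · exact hcf2
    obtain ⟨y, hymem⟩ : (P.faceEdges t₂ \ {b, c}).Nonempty := by
      rw [← Finset.card_pos, Finset.card_sdiff_of_subset hbcsub, h32, Finset.card_insert_of_notMem
        (by simp only [Finset.mem_singleton]; exact fun h => hcb h.symm), Finset.card_singleton]
      omega
    obtain ⟨hyf2, hybc⟩ := Finset.mem_sdiff.mp hymem
    have hyb : y ≠ b := fun h => hybc (by simp [h])
    have hyc : y ≠ c := fun h => hybc (by simp [h])
    have hft₂ : P.faceEdges t₂ = {b, c, y} := by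
      symm
      apply Finset.eq_of_subset_of_card_le
      · intro z hz
        simp only [mem_insert, mem_singleton] at hz
        rcases hz with rfl|rfl|rfl
        · exact hbf2
        · exact hcf2
        · exact hyf2
      · rw [h32, Finset.card_insert_of_notMem (by simp [Ne.symm hcb, Ne.symm hyb]),
          Finset.card_insert_of_notMem (by simp [Ne.symm hyc]), Finset.card_singleton]
    have hyV : y ∉ P.vertexEdges v := by
      intro h
      have hy : y ∈ s₂ := Finset.mem_filter.mpr ⟨h, hyf2⟩
      rcases hspec₂ y hy with h'|h'
      · exact hyb h'
      · exact hyc h'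
    have hvy : v ∉ P.endpoints y := fun h => hyV ((P.vertex_edge_incidence v y).mp h)
    -- x is not an edge of t₂, y not an edge of t₁, x ≠ y
    have hyf1 : y ∉ P.faceEdges t₁ := by
      intro h
      rw [hft₁] at h
      simp only [mem_insert, mem_singleton] at h
      rcases h with h3|h3|h3
      · exact hyV (by rw [h3]; exact haV)
      · exact hyV (by rw [h3]; exact hbV)
      · exact P.no_two_shared ht12 hxb hxf1 (by rw [← h3]; exact hyf2) hbf1 hbf2
    have hxf2 : x ∉ P.faceEdges t₂ := by
      intro h
      rw [hft₂] at h
      simp only [mem_insert, mem_singleton] at h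
      rcases h with h3|h3|h3
      · exact hxV (by rw [h3]; exact hbV)
      · exact hxV (by rw [h3]; exact hcV)
      · exact hyf1 (by rw [← h3]; exact hxf1)
    have hxy : x ≠ y := fun h => hyf1 (h ▸ hxf1)
    -- endpoints of a, b, c
    obtain ⟨p, hpv, hpa, hspecPa⟩ := two_elt (P.endpoints_card a)
      ((P.vertex_edge_incidence v a).mpr haV)
    obtain ⟨w, hwv, hwb, hspecWb⟩ := two_elt (P.endpoints_card b)
      ((P.vertex_edge_incidence v b).mpr hbV)
    obtain ⟨q, hqv, hqc, hspecQc⟩ := two_elt (P.endpoints_card c)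
      ((P.vertex_edge_incidence v c).mpr hcV)
    have haVp : a ∈ P.vertexEdges p := (P.vertex_edge_incidence p a).mp hpa
    have hbVw : b ∈ P.vertexEdges w := (P.vertex_edge_incidence w b).mp hwb
    have hcVq : c ∈ P.vertexEdges q := (P.vertex_edge_incidence q c).mp hqc
    have hax : a ≠ x := fun h => hxV (h ▸ haV)
    have hay : a ≠ y := fun h => hyV (h ▸ haV)
    have hbx : b ≠ x := fun h => hxV (h ▸ hbV)
    have hby : b ≠ y := fun h => hyV (h ▸ hbV)
    have hcx : c ≠ x := fun h => hxV (h ▸ hcV)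
    have hcy : c ≠ y := fun h => hyV (h ▸ hcV)
    -- p ≠ w
    have hpw : p ≠ w := by
      intro hpweq
      by_cases hpx : p ∈ P.endpoints x
      · have hxp : x ∈ P.vertexEdges p := (P.vertex_edge_incidence p x).mp hpx
        have hbp : b ∈ P.vertexEdges p := by rw [hpweq]; exact hbVw
        have hin : t₁ ∈ P.facesAt p := P.mem_facesAt.mpr ⟨a, haVp, haf1⟩
        have h2 := hd2 p t₁ hin
        have hsub : ({a, b, x} : Finset P.Edge) ⊆
            (P.vertexEdges p).filter (fun e => e ∈ P.faceEdges t₁) := by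
          intro z hz
          simp only [mem_insert, mem_singleton] at hz
          rcases hz with rfl|rfl|rfl
          · exact Finset.mem_filter.mpr ⟨haVp, haf1⟩
          · exact Finset.mem_filter.mpr ⟨hbp, hbf1⟩
          · exact Finset.mem_filter.mpr ⟨hxp, hxf1⟩
        have hc3 : ({a, b, x} : Finset P.Edge).card = 3 := by
          rw [Finset.card_insert_of_notMem (by simp [hab, hax]),
            Finset.card_insert_of_notMem (by simp [hbx]), Finset.card_singleton]
        have hle := Finset.card_le_card hsub
        rw [hc3, h2] at hle
        omega
      · have hsub : insert v (insert p (P.endpoints x)) ⊆ P.faceVerts t₁ := by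
          intro z hz
          simp only [mem_insert] at hz
          rcases hz with hz|hz|hz
          · rw [hz]; exact hv1
          · rw [hz]; exact (hmemFV t₁ p).mpr ⟨a, haf1, hpa⟩
          · exact P.edge_verts_subset_face x t₁ hxf1 hz
        have hc : (insert v (insert p (P.endpoints x))).card = 4 := by
          rw [Finset.card_insert_of_notMem (by simp [Ne.symm hpv, hvx]),
            Finset.card_insert_of_notMem hpx, P.endpoints_card]
        have hle := Finset.card_le_card hsub
        rw [hc, P.faceVerts_card, h31] at hle
        omega
    -- q ≠ w
    have hqw : q ≠ w := by
      intro hqweq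
      by_cases hqy : q ∈ P.endpoints y
      · have hyq : y ∈ P.vertexEdges q := (P.vertex_edge_incidence q y).mp hqy
        have hbq : b ∈ P.vertexEdges q := by rw [hqweq]; exact hbVw
        have hin : t₂ ∈ P.facesAt q := P.mem_facesAt.mpr ⟨c, hcVq, hcf2⟩
        have h2 := hd2 q t₂ hin
        have hsub : ({c, b, y} : Finset P.Edge) ⊆
            (P.vertexEdges q).filter (fun e => e ∈ P.faceEdges t₂) := by
          intro z hz
          simp only [mem_insert, mem_singleton] at hz
          rcases hz with rfl|rfl|rfl
          · exact Finset.mem_filter.mpr ⟨hcVq, hcf2⟩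
          · exact Finset.mem_filter.mpr ⟨hbq, hbf2⟩
          · exact Finset.mem_filter.mpr ⟨hyq, hyf2⟩
        have hc3 : ({c, b, y} : Finset P.Edge).card = 3 := by
          rw [Finset.card_insert_of_notMem (by simp [hcb, hcy]),
            Finset.card_insert_of_notMem (by simp [hby]), Finset.card_singleton]
        have hle := Finset.card_le_card hsub
        rw [hc3, h2] at hle
        omega
      · have hsub : insert v (insert q (P.endpoints y)) ⊆ P.faceVerts t₂ := by
          intro z hz
          simp only [mem_insert] at hz
          rcases hz with hz|hz|hz
          · rw [hz]; exact hv2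
          · rw [hz]; exact (hmemFV t₂ q).mpr ⟨c, hcf2, hqc⟩
          · exact P.edge_verts_subset_face y t₂ hyf2 hz
        have hc : (insert v (insert q (P.endpoints y))).card = 4 := by
          rw [Finset.card_insert_of_notMem (by simp [Ne.symm hqv, hvy]),
            Finset.card_insert_of_notMem hqy, P.endpoints_card]
        have hle := Finset.card_le_card hsub
        rw [hc, P.faceVerts_card, h32] at hle
        omega
    -- the vertex sets of the triangles
    have hfv1 : P.faceVerts t₁ = {v, p, w} := by
      symm
      apply Finset.eq_of_subset_of_card_le
      · intro z hz
        simp only [mem_insert, mem_singleton] at hz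
        rcases hz with hz|hz|hz
        · rw [hz]; exact hv1
        · rw [hz]; exact (hmemFV t₁ p).mpr ⟨a, haf1, hpa⟩
        · rw [hz]; exact (hmemFV t₁ w).mpr ⟨b, hbf1, hwb⟩
      · rw [P.faceVerts_card, h31, Finset.card_insert_of_notMem
          (by simp [Ne.symm hpv, Ne.symm hwv]),
          Finset.card_insert_of_notMem (by simp [hpw]), Finset.card_singleton]
    have hfv2 : P.faceVerts t₂ = {v, q, w} := by
      symm
      apply Finset.eq_of_subset_of_card_le
      · intro z hz
        simp only [mem_insert, mem_singleton] at hz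
        rcases hz with hz|hz|hz
        · rw [hz]; exact hv2
        · rw [hz]; exact (hmemFV t₂ q).mpr ⟨c, hcf2, hqc⟩
        · rw [hz]; exact (hmemFV t₂ w).mpr ⟨b, hbf2, hwb⟩
      · rw [P.faceVerts_card, h32, Finset.card_insert_of_notMem
          (by simp [Ne.symm hqv, Ne.symm hwv]),
          Finset.card_insert_of_notMem (by simp [hqw]), Finset.card_singleton]
    -- endpoints of x and y
    have hepx : P.endpoints x = {p, w} := by
      apply Finset.eq_of_subset_of_card_le
      · intro z hz
        have hzfv : z ∈ P.faceVerts t₁ := P.edge_verts_subset_face x t₁ hxf1 hz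
        rw [hfv1] at hzfv
        simp only [mem_insert, mem_singleton] at hzfv ⊢
        rcases hzfv with rfl|h|h
        · exact absurd hz hvx
        · exact Or.inl h
        · exact Or.inr h
      · rw [P.endpoints_card, Finset.card_insert_of_notMem (by simp [hpw]),
          Finset.card_singleton]
    have hepy : P.endpoints y = {q, w} := by
      apply Finset.eq_of_subset_of_card_le
      · intro z hz
        have hzfv : z ∈ P.faceVerts t₂ := P.edge_verts_subset_face y t₂ hyf2 hz
        rw [hfv2] at hzfv
        simp only [mem_insert, mem_singleton] at hzfv ⊢
        rcases hzfv with rfl|h|h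
        · exact absurd hz hvy
        · exact Or.inl h
        · exact Or.inr h
      · rw [P.endpoints_card, Finset.card_insert_of_notMem (by simp [hqw]),
          Finset.card_singleton]
    have hxVp : x ∈ P.vertexEdges p :=
      (P.vertex_edge_incidence p x).mp (by rw [hepx]; simp)
    have hxVw : x ∈ P.vertexEdges w :=
      (P.vertex_edge_incidence w x).mp (by rw [hepx]; simp)
    have hyVq : y ∈ P.vertexEdges q :=
      (P.vertex_edge_incidence q y).mp (by rw [hepy]; simp)
    have hyVw : y ∈ P.vertexEdges w :=
      (P.vertex_edge_incidence w y).mp (by rw [hepy]; simp)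
    -- p ≠ q
    have hpq : p ≠ q := by
      intro hpqeq
      have hcVp : c ∈ P.vertexEdges p := by rw [hpqeq]; exact hcVq
      have hyVp : y ∈ P.vertexEdges p := by rw [hpqeq]; exact hyVq
      have hsub : ({a, c, x, y} : Finset P.Edge) ⊆ P.vertexEdges p := by
        intro z hz
        simp only [mem_insert, mem_singleton] at hz
        rcases hz with rfl|rfl|rfl|rfl
        · exact haVp
        · exact hcVp
        · exact hxVp
        · exact hyVp
      have hc4 : ({a, c, x, y} : Finset P.Edge).card = 4 := by
        rw [Finset.card_insert_of_notMem (by simp [hac, hax, hay]),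
          Finset.card_insert_of_notMem (by simp [hcx, hcy]),
          Finset.card_insert_of_notMem (by simp [hxy]), Finset.card_singleton]
      have hle := Finset.card_le_card hsub
      rw [hc4, hdeg p] at hle
      omega
    -- the edges at w
    have hvEw : P.vertexEdges w = {b, x, y} := by
      symm
      apply Finset.eq_of_subset_of_card_le
      · intro z hz
        simp only [mem_insert, mem_singleton] at hz
        rcases hz with rfl|rfl|rfl
        · exact hbVw
        · exact hxVw
        · exact hyVw
      · rw [hdeg w, Finset.card_insert_of_notMem (by simp [hbx, hby]),
          Finset.card_insert_of_notMem (by simp [hxy]), Finset.card_singleton]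
    -- the face g opposite to the triangles across x and y
    obtain ⟨g, hgt₁, hgx, hspecX⟩ := two_elt (P.edgeFaces_card x)
      ((P.edge_face_incidence x t₁).mpr hxf1)
    have hxg : x ∈ P.faceEdges g := (P.edge_face_incidence x g).mp hgx
    have hgt₂ : g ≠ t₂ := by rintro rfl; exact hxf2 hxg
    obtain ⟨g', hg't₂, hg'y, hspecY⟩ := two_elt (P.edgeFaces_card y)
      ((P.edge_face_incidence y t₂).mpr hyf2)
    have hyg' : y ∈ P.faceEdges g' := (P.edge_face_incidence y g').mp hg'y
    have hg't₁ : g' ≠ t₁ := by rintro rfl; exact hyf1 hyg'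
    have hgg' : g' = g := by
      by_contra hne
      have hsub : ({t₁, t₂, g, g'} : Finset P.Face) ⊆ P.facesAt w := by
        intro z hz
        simp only [mem_insert, mem_singleton] at hz
        rcases hz with rfl|rfl|rfl|rfl
        · exact P.mem_facesAt.mpr ⟨b, hbVw, hbf1⟩
        · exact P.mem_facesAt.mpr ⟨b, hbVw, hbf2⟩
        · exact P.mem_facesAt.mpr ⟨x, hxVw, hxg⟩
        · exact P.mem_facesAt.mpr ⟨y, hyVw, hyg'⟩
      have hcard : ({t₁, t₂, g, g'} : Finset P.Face).card = 4 := by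
        rw [Finset.card_insert_of_notMem (by simp [ht12, Ne.symm hgt₁, Ne.symm hg't₁]),
          Finset.card_insert_of_notMem (by simp [Ne.symm hgt₂, Ne.symm hg't₂]),
          Finset.card_insert_of_notMem (by simp only [Finset.mem_singleton]; exact fun h => hne h.symm),
          Finset.card_singleton]
      have hle := Finset.card_le_card hsub
      rw [hcard, hfaCard w] at hle
      omega
    rw [hgg'] at hyg' hg't₂ hg't₁ hspecY
    have hf₃g : f₃ ≠ g := by
      rintro rfl
      exact P.no_two_shared hf₃t₁ hax haf3 haf1 hxg hxf1
    -- the third edge z at p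
    obtain ⟨z, hzmem⟩ : (P.vertexEdges p \ {a, x}).Nonempty := by
      rw [← Finset.card_pos, Finset.card_sdiff_of_subset (by
          intro e he
          simp only [mem_insert, mem_singleton] at he
          rcases he with rfl|rfl
          · exact haVp
          · exact hxVp),
        hdeg p, Finset.card_insert_of_notMem (by simp [hax]), Finset.card_singleton]
      omega
    obtain ⟨hzVp, hzax⟩ := Finset.mem_sdiff.mp hzmem
    have hza : z ≠ a := fun h => hzax (by simp [h])
    have hzx : z ≠ x := fun h => hzax (by simp [h])
    have hinp : t₁ ∈ P.facesAt p := P.mem_facesAt.mpr ⟨a, haVp, haf1⟩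
    have hfilterp : (P.vertexEdges p).filter (fun e => e ∈ P.faceEdges t₁) = {a, x} := by
      symm
      apply Finset.eq_of_subset_of_card_le
      · intro e he
        simp only [mem_insert, mem_singleton] at he
        rcases he with rfl|rfl
        · exact Finset.mem_filter.mpr ⟨haVp, haf1⟩
        · exact Finset.mem_filter.mpr ⟨hxVp, hxf1⟩
      · rw [hd2 p t₁ hinp, Finset.card_insert_of_notMem (by simp [hax]),
          Finset.card_singleton]
    have hzf1 : z ∉ P.faceEdges t₁ := by
      intro h
      have hmem : z ∈ (P.vertexEdges p).filter (fun e => e ∈ P.faceEdges t₁) :=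
        Finset.mem_filter.mpr ⟨hzVp, h⟩
      rw [hfilterp] at hmem
      simp only [mem_insert, mem_singleton] at hmem
      rcases hmem with h'|h'
      · exact hza h'
      · exact hzx h'
    have hfap : P.facesAt p = {t₁, f₃, g} := by
      symm
      apply Finset.eq_of_subset_of_card_le
      · intro h hh
        simp only [mem_insert, mem_singleton] at hh
        rcases hh with hh|hh|hh
        · rw [hh]; exact hinp
        · rw [hh]; exact P.mem_facesAt.mpr ⟨a, haVp, haf3⟩
        · rw [hh]; exact P.mem_facesAt.mpr ⟨x, hxVp, hxg⟩
      · rw [hfaCard p, Finset.card_insert_of_notMem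
          (by simp [Ne.symm hf₃t₁, Ne.symm hgt₁]),
          Finset.card_insert_of_notMem (by simp [hf₃g]), Finset.card_singleton]
    have hedgeZ : P.edgeFaces z = {f₃, g} := by
      apply Finset.eq_of_subset_of_card_le
      · intro h hh
        have hfz : h ∈ P.facesAt p := P.edgeFaces_subset_facesAt hzVp hh
        rw [hfap] at hfz
        simp only [mem_insert, mem_singleton] at hfz ⊢
        rcases hfz with h1|h1|h1
        · exact absurd (h1 ▸ (P.edge_face_incidence z h).mp hh) hzf1
        · exact Or.inl h1
        · exact Or.inr h1
      · rw [P.edgeFaces_card, Finset.card_insert_of_notMem (by simp [hf₃g]),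
          Finset.card_singleton]
    have hzf₃ : z ∈ P.faceEdges f₃ :=
      (P.edge_face_incidence z f₃).mp (by rw [hedgeZ]; simp)
    have hzg : z ∈ P.faceEdges g :=
      (P.edge_face_incidence z g).mp (by rw [hedgeZ]; simp)
    -- the third edge z' at q
    obtain ⟨z', hz'mem⟩ : (P.vertexEdges q \ {c, y}).Nonempty := by
      rw [← Finset.card_pos, Finset.card_sdiff_of_subset (by
          intro e he
          simp only [mem_insert, mem_singleton] at he
          rcases he with rfl|rfl
          · exact hcVq
          · exact hyVq),
        hdeg q, Finset.card_insert_of_notMem (by simp [hcy]), Finset.card_singleton]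
      omega
    obtain ⟨hz'Vq, hz'cy⟩ := Finset.mem_sdiff.mp hz'mem
    have hz'c : z' ≠ c := fun h => hz'cy (by simp [h])
    have hz'y : z' ≠ y := fun h => hz'cy (by simp [h])
    have hinq : t₂ ∈ P.facesAt q := P.mem_facesAt.mpr ⟨c, hcVq, hcf2⟩
    have hfilterq : (P.vertexEdges q).filter (fun e => e ∈ P.faceEdges t₂) = {c, y} := by
      symm
      apply Finset.eq_of_subset_of_card_le
      · intro e he
        simp only [mem_insert, mem_singleton] at he
        rcases he with rfl|rfl
        · exact Finset.mem_filter.mpr ⟨hcVq, hcf2⟩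
        · exact Finset.mem_filter.mpr ⟨hyVq, hyf2⟩
      · rw [hd2 q t₂ hinq, Finset.card_insert_of_notMem (by simp [hcy]),
          Finset.card_singleton]
    have hz'f2 : z' ∉ P.faceEdges t₂ := by
      intro h
      have hmem : z' ∈ (P.vertexEdges q).filter (fun e => e ∈ P.faceEdges t₂) :=
        Finset.mem_filter.mpr ⟨hz'Vq, h⟩
      rw [hfilterq] at hmem
      simp only [mem_insert, mem_singleton] at hmem
      rcases hmem with h'|h'
      · exact hz'c h'
      · exact hz'y h'
    have hfaq : P.facesAt q = {t₂, f₃, g} := by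
      symm
      apply Finset.eq_of_subset_of_card_le
      · intro h hh
        simp only [mem_insert, mem_singleton] at hh
        rcases hh with hh|hh|hh
        · rw [hh]; exact hinq
        · rw [hh]; exact P.mem_facesAt.mpr ⟨c, hcVq, hcf3'⟩
        · rw [hh]; exact P.mem_facesAt.mpr ⟨y, hyVq, hyg'⟩
      · rw [hfaCard q, Finset.card_insert_of_notMem
          (by simp [Ne.symm hf₃t₂, Ne.symm hgt₂]),
          Finset.card_insert_of_notMem (by simp [hf₃g]), Finset.card_singleton]
    have hedgeZ' : P.edgeFaces z' = {f₃, g} := by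
      apply Finset.eq_of_subset_of_card_le
      · intro h hh
        have hfz : h ∈ P.facesAt q := P.edgeFaces_subset_facesAt hz'Vq hh
        rw [hfaq] at hfz
        simp only [mem_insert, mem_singleton] at hfz ⊢
        rcases hfz with h1|h1|h1
        · exact absurd (h1 ▸ (P.edge_face_incidence z' h).mp hh) hz'f2
        · exact Or.inl h1
        · exact Or.inr h1
      · rw [P.edgeFaces_card, Finset.card_insert_of_notMem (by simp [hf₃g]),
          Finset.card_singleton]
    have hz'f₃ : z' ∈ P.faceEdges f₃ :=
      (P.edge_face_incidence z' f₃).mp (by rw [hedgeZ']; simp)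
    have hz'g : z' ∈ P.faceEdges g :=
      (P.edge_face_incidence z' g).mp (by rw [hedgeZ']; simp)
    -- z ≠ z'
    have hzy : z ≠ y := by
      intro h
      have hpy : p ∈ P.endpoints y :=
        (P.vertex_edge_incidence p y).mpr (by rw [← h]; exact hzVp)
      rw [hepy] at hpy
      simp only [mem_insert, mem_singleton] at hpy
      rcases hpy with h'|h'
      · exact hpq h'
      · exact hpw h'
    have hzz' : z ≠ z' := by
      intro hzz
      have hzVq : z ∈ P.vertexEdges q := by rw [hzz]; exact hz'Vq
      -- g is a quadrilateral
      have hg4 : (P.faceEdges g).card = 4 := by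
        rcases face34 g with h4|h3
        · exact h4
        · rcases honly g h3 with h'|h'
          · exact absurd h' hgt₁
          · exact absurd h' hgt₂
      have hxyzsub : ({x, y, z} : Finset P.Edge) ⊆ P.faceEdges g := by
        intro e he
        simp only [mem_insert, mem_singleton] at he
        rcases he with rfl|rfl|rfl
        · exact hxg
        · exact hyg'
        · exact hzg
      obtain ⟨u, humem⟩ : (P.faceEdges g \ {x, y, z}).Nonempty := by
        rw [← Finset.card_pos, Finset.card_sdiff_of_subset hxyzsub, hg4,
          Finset.card_insert_of_notMem (by simp [hxy, Ne.symm hzx]),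
          Finset.card_insert_of_notMem (by simp [Ne.symm hzy]), Finset.card_singleton]
        omega
      obtain ⟨hug, huxyz⟩ := Finset.mem_sdiff.mp humem
      have hux : u ≠ x := fun h => huxyz (by simp [h])
      have huy : u ≠ y := fun h => huxyz (by simp [h])
      have huz : u ≠ z := fun h => huxyz (by simp [h])
      -- endpoints of u avoid p, q and w
      have hvEp : P.vertexEdges p = {a, x, z} := by
        symm
        apply Finset.eq_of_subset_of_card_le
        · intro e he
          simp only [mem_insert, mem_singleton] at he
          rcases he with rfl|rfl|rfl
          · exact haVp
          · exact hxVp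
          · exact hzVp
        · rw [hdeg p, Finset.card_insert_of_notMem (by simp [hax, Ne.symm hza]),
            Finset.card_insert_of_notMem (by simp [Ne.symm hzx]), Finset.card_singleton]
      have hvEq : P.vertexEdges q = {c, y, z'} := by
        symm
        apply Finset.eq_of_subset_of_card_le
        · intro e he
          simp only [mem_insert, mem_singleton] at he
          rcases he with rfl|rfl|rfl
          · exact hcVq
          · exact hyVq
          · exact hz'Vq
        · rw [hdeg q, Finset.card_insert_of_notMem (by simp [hcy, Ne.symm hz'c]),
            Finset.card_insert_of_notMem (by simp [Ne.symm hz'y]), Finset.card_singleton]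
      have hedgeB : P.edgeFaces b = {t₁, t₂} := by
        symm
        apply Finset.eq_of_subset_of_card_le
        · intro h hh
          simp only [mem_insert, mem_singleton] at hh
          rcases hh with hh|hh
          · rw [hh]; exact (P.edge_face_incidence b t₁).mpr hbf1
          · rw [hh]; exact (P.edge_face_incidence b t₂).mpr hbf2
        · rw [P.edgeFaces_card, Finset.card_insert_of_notMem (by simp [ht12]),
            Finset.card_singleton]
      have hup : p ∉ P.endpoints u := by
        intro h
        have huVp : u ∈ P.vertexEdges p := (P.vertex_edge_incidence p u).mp h
        rw [hvEp] at huVp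
        simp only [mem_insert, mem_singleton] at huVp
        rcases huVp with h'|h'|h'
        · have hga : g ∈ P.edgeFaces a := by
            rw [← h']; exact (P.edge_face_incidence u g).mpr hug
          rcases hspecA g hga with h''|h''
          · exact hgt₁ h''
          · exact hf₃g h''.symm
        · exact hux h'
        · exact huz h'
      have huq : q ∉ P.endpoints u := by
        intro h
        have huVq : u ∈ P.vertexEdges q := (P.vertex_edge_incidence q u).mp h
        rw [hvEq] at huVq
        simp only [mem_insert, mem_singleton] at huVq
        rcases huVq with h'|h'|h'
        · have hgc : g ∈ P.edgeFaces c := by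
            rw [← h']; exact (P.edge_face_incidence u g).mpr hug
          rcases hspecC g hgc with h''|h''
          · exact hgt₂ h''
          · exact hf₃g h''.symm
        · exact huy h'
        · exact huz (by rw [h', ← hzz])
      have huw : w ∉ P.endpoints u := by
        intro h
        have huVw : u ∈ P.vertexEdges w := (P.vertex_edge_incidence w u).mp h
        rw [hvEw] at huVw
        simp only [mem_insert, mem_singleton] at huVw
        rcases huVw with h'|h'|h'
        · have hgb : g ∈ P.edgeFaces b := by
            rw [← h']; exact (P.edge_face_incidence u g).mpr hug
          rw [hedgeB] at hgb
          simp only [mem_insert, mem_singleton] at hgb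
          rcases hgb with h''|h''
          · exact hgt₁ h''
          · exact hgt₂ h''
        · exact hux h'
        · exact huy h'
      have hsubV : insert p (insert q (insert w (P.endpoints u))) ⊆ P.faceVerts g := by
        intro r hr
        simp only [mem_insert] at hr
        rcases hr with hr|hr|hr|hr
        · rw [hr]; exact (hmemFV g p).mpr ⟨x, hxg, by rw [hepx]; simp⟩
        · rw [hr]; exact (hmemFV g q).mpr ⟨y, hyg', by rw [hepy]; simp⟩
        · rw [hr]; exact (hmemFV g w).mpr ⟨x, hxg, by rw [hepx]; simp⟩
        · exact P.edge_verts_subset_face u g hug hr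
      have hc5 : (insert p (insert q (insert w (P.endpoints u)))).card = 5 := by
        rw [Finset.card_insert_of_notMem (by simp [hpq, hpw, hup]),
          Finset.card_insert_of_notMem (by simp [hqw, huq]),
          Finset.card_insert_of_notMem huw, P.endpoints_card]
      have hle := Finset.card_le_card hsubV
      rw [hc5, P.faceVerts_card, hg4] at hle
      omega
    exact P.no_two_shared hf₃g hzz' hzf₃ hzg hz'f₃ hz'g
  -- assemble the final statement
  have hDisj : ∀ f g : P.Face, f ≠ g → (P.faceEdges f).card = 3 → (P.faceEdges g).card = 3 →
      Disjoint (P.faceVerts f) (P.faceVerts g) := by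
    intro f g hfg h3f h3g
    rw [Finset.disjoint_left]
    intro u hu1 hu2
    exact hdisjTri f g hfg h3f h3g u hu1 hu2
  refine ⟨hE, hV, hdeg, hDisj, hF, ?_⟩
  obtain ⟨t₁, t₂, ht, hfil⟩ := Finset.card_eq_two.mp htri
  have h31 : (P.faceEdges t₁).card = 3 := by
    have : t₁ ∈ univ.filter (fun f : P.Face => (P.faceEdges f).card = 3) := by
      rw [hfil]; simp
    exact (Finset.mem_filter.mp this).2
  have h32 : (P.faceEdges t₂).card = 3 := by
    have : t₂ ∈ univ.filter (fun f : P.Face => (P.faceEdges f).card = 3) := by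
      rw [hfil]; simp
    exact (Finset.mem_filter.mp this).2
  refine ⟨t₁, t₂, ht, h31, h32, hDisj t₁ t₂ ht h31 h32, ?_⟩
  intro f hf1 hf2
  rcases face34 f with h4|h3
  · exact h4
  · exfalso
    have : f ∈ univ.filter (fun f : P.Face => (P.faceEdges f).card = 3) :=
      Finset.mem_filter.mpr ⟨mem_univ f, h3⟩
    rw [hfil] at this
    simp only [mem_insert, mem_singleton] at this
    rcases this with h'|h'
    · exact hf1 h'
    · exact hf2 h'
end

section
/- A nondegenerate polyhedron with exactly five faces is combinatorially equivalent to either a quadrilateral pyramid or a triangular prism. -/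
section Aux

attribute [local instance] Classical.decEq

namespace CombPolyhedron

private lemma sum_card_eq {α β : Type} [Fintype α] [Fintype β]
    (s : α → Finset β) (t : β → Finset α) (h : ∀ a b, b ∈ s a ↔ a ∈ t b) :
    ∑ a, (s a).card = ∑ b, (t b).card := by
  classical
  calc ∑ a, (s a).card = ∑ a, ∑ b, if b ∈ s a then 1 else 0 := by
        refine Finset.sum_congr rfl fun a _ => ?_
        rw [← Finset.card_filter, Finset.filter_univ_mem]
    _ = ∑ b, ∑ a, if b ∈ s a then 1 else 0 := Finset.sum_comm
    _ = ∑ b, (t b).card := by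
        refine Finset.sum_congr rfl fun b _ => ?_
        simp only [h]
        rw [← Finset.card_filter, Finset.filter_univ_mem]

attribute [local instance] Classical.decEq

variable (P : CombPolyhedron)

/-- faces meeting vertex v through an edge -/
noncomputable def vF (v : P.Vertex) : Finset P.Face :=
  (P.vertexEdges v).biUnion P.edgeFaces

/-- vertices of face f that are endpoints of its edges -/
noncomputable def uF (f : P.Face) : Finset P.Vertex :=
  (P.faceEdges f).biUnion P.endpoints

lemma mem_vF {v : P.Vertex} {f : P.Face} :
    f ∈ P.vF v ↔ ∃ e ∈ P.vertexEdges v, f ∈ P.edgeFaces e := by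
  simp [vF]

lemma mem_uF {f : P.Face} {v : P.Vertex} :
    v ∈ P.uF f ↔ ∃ e ∈ P.faceEdges f, v ∈ P.endpoints e := by
  simp [uF]

lemma mem_uF_iff_mem_vF {f : P.Face} {v : P.Vertex} : v ∈ P.uF f ↔ f ∈ P.vF v := by
  rw [mem_uF, mem_vF]
  constructor
  · rintro ⟨e, he, hv⟩
    exact ⟨e, (P.vertex_edge_incidence v e).1 hv, (P.edge_face_incidence e f).2 he⟩
  · rintro ⟨e, he, hf⟩
    exact ⟨e, (P.edge_face_incidence e f).1 hf, (P.vertex_edge_incidence v e).2 he⟩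

lemma uF_subset (f : P.Face) : P.uF f ⊆ P.faceVerts f := by
  intro v hv
  rw [mem_uF] at hv
  obtain ⟨e, he, hv⟩ := hv
  exact P.edge_verts_subset_face e f he hv

lemma sum_faceEdges : ∑ f, (P.faceEdges f).card = 2 * Fintype.card P.Edge := by
  rw [sum_card_eq P.faceEdges P.edgeFaces (fun f e => (P.edge_face_incidence e f).symm)]
  simp only [P.edgeFaces_card, Finset.sum_const, smul_eq_mul, Finset.card_univ]
  ring

lemma sum_deg : ∑ v, (P.vertexEdges v).card = 2 * Fintype.card P.Edge := by
  rw [sum_card_eq P.vertexEdges P.endpoints (fun v e => (P.vertex_edge_incidence v e).symm)]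
  simp only [P.endpoints_card, Finset.sum_const, smul_eq_mul, Finset.card_univ]
  ring

lemma sum_uF_eq_sum_vF : ∑ f, (P.uF f).card = ∑ v, (P.vF v).card :=
  sum_card_eq P.uF P.vF (fun f v => P.mem_uF_iff_mem_vF)

lemma edgeFaces_injective : Function.Injective P.edgeFaces := by
  intro e₁ e₂ h
  by_contra hne
  obtain ⟨f, g, hfg, hs⟩ := Finset.card_eq_two.1 (P.edgeFaces_card e₁)
  have hf₁ : e₁ ∈ P.faceEdges f := (P.edge_face_incidence e₁ f).1 (by rw [hs]; simp)
  have hg₁ : e₁ ∈ P.faceEdges g := (P.edge_face_incidence e₁ g).1 (by rw [hs]; simp)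
  have hf₂ : e₂ ∈ P.faceEdges f := (P.edge_face_incidence e₂ f).1 (by rw [← h, hs]; simp)
  have hg₂ : e₂ ∈ P.faceEdges g := (P.edge_face_incidence e₂ g).1 (by rw [← h, hs]; simp)
  have : ({e₁, e₂} : Finset P.Edge) ⊆ P.faceEdges f ∩ P.faceEdges g := by
    intro x hx
    rcases Finset.mem_insert.1 hx with rfl | hx
    · exact Finset.mem_inter.2 ⟨hf₁, hg₁⟩
    · rw [Finset.mem_singleton.1 hx]; exact Finset.mem_inter.2 ⟨hf₂, hg₂⟩
  have h2 : (2 : ℕ) ≤ (P.faceEdges f ∩ P.faceEdges g).card := by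
    calc (2:ℕ) = ({e₁, e₂} : Finset P.Edge).card := (Finset.card_pair hne).symm
    _ ≤ _ := Finset.card_le_card this
  have := P.faces_share_at_most_one_edge f g hfg
  omega

/-- faces sharing an edge with f -/
noncomputable def Nb (f : P.Face) : Finset P.Face :=
  (P.faceEdges f).biUnion (fun e => (P.edgeFaces e).erase f)

/-- f and g share an edge -/
def Adj (f g : P.Face) : Prop := ∃ e, e ∈ P.faceEdges f ∧ e ∈ P.faceEdges g

lemma adj_symm {f g : P.Face} (h : P.Adj f g) : P.Adj g f := by
  obtain ⟨e, h1, h2⟩ := h; exact ⟨e, h2, h1⟩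

lemma mem_Nb {f g : P.Face} : g ∈ P.Nb f ↔ g ≠ f ∧ P.Adj f g := by
  simp only [Nb, Finset.mem_biUnion, Finset.mem_erase]
  constructor
  · rintro ⟨e, he, hg, hge⟩
    exact ⟨hg, e, he, (P.edge_face_incidence e g).1 hge⟩
  · rintro ⟨hg, e, he, hge⟩
    exact ⟨e, he, hg, (P.edge_face_incidence e g).2 hge⟩

lemma card_Nb (f : P.Face) : (P.Nb f).card = (P.faceEdges f).card := by
  have hdisj : ∀ e₁ ∈ P.faceEdges f, ∀ e₂ ∈ P.faceEdges f, e₁ ≠ e₂ →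
      Disjoint ((P.edgeFaces e₁).erase f) ((P.edgeFaces e₂).erase f) := by
    intro e₁ he₁ e₂ he₂ hne
    rw [Finset.disjoint_left]
    intro g hg₁ hg₂
    rw [Finset.mem_erase] at hg₁ hg₂
    have h1 : e₁ ∈ P.faceEdges f ∩ P.faceEdges g :=
      Finset.mem_inter.2 ⟨he₁, (P.edge_face_incidence e₁ g).1 hg₁.2⟩
    have h2 : e₂ ∈ P.faceEdges f ∩ P.faceEdges g :=
      Finset.mem_inter.2 ⟨he₂, (P.edge_face_incidence e₂ g).1 hg₂.2⟩
    have hle := P.faces_share_at_most_one_edge f g (Ne.symm hg₁.1)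
    have : ({e₁, e₂} : Finset P.Edge) ⊆ P.faceEdges f ∩ P.faceEdges g := by
      intro x hx
      rcases Finset.mem_insert.1 hx with rfl | hx
      · exact h1
      · rwa [Finset.mem_singleton.1 hx]
    have := Finset.card_le_card this
    rw [Finset.card_pair hne] at this
    omega
  have h : (P.Nb f).card = ∑ e ∈ P.faceEdges f, ((P.edgeFaces e).erase f).card :=
    Finset.card_biUnion hdisj
  rw [h]
  calc ∑ e ∈ P.faceEdges f, ((P.edgeFaces e).erase f).card
      = ∑ _e ∈ P.faceEdges f, 1 := by
        refine Finset.sum_congr rfl fun e he => ?_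
        rw [Finset.card_erase_of_mem ((P.edge_face_incidence e f).2 he), P.edgeFaces_card]
    _ = (P.faceEdges f).card := by simp

lemma Nb_subset (f : P.Face) :
    P.Nb f ⊆ Finset.univ.erase f := by
  intro g hg
  exact Finset.mem_erase.2 ⟨(P.mem_Nb.1 hg).1, Finset.mem_univ g⟩

lemma k_le_four (hF : Fintype.card P.Face = 5) (f : P.Face) : (P.faceEdges f).card ≤ 4 := by
  have := Finset.card_le_card (P.Nb_subset f)
  rw [P.card_Nb, Finset.card_erase_of_mem (Finset.mem_univ f), Finset.card_univ, hF] at this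
  omega

lemma adj_of_quad (hF : Fintype.card P.Face = 5) {f : P.Face}
    (hk : (P.faceEdges f).card = 4) {g : P.Face} (hg : g ≠ f) : P.Adj f g := by
  have hcard : (Finset.univ.erase f).card ≤ (P.Nb f).card := by
    rw [P.card_Nb, hk, Finset.card_erase_of_mem (Finset.mem_univ f), Finset.card_univ, hF]
  have heq := Finset.eq_of_subset_of_card_le (P.Nb_subset f) hcard
  have : g ∈ P.Nb f := by
    rw [heq]; exact Finset.mem_erase.2 ⟨hg, Finset.mem_univ g⟩
  exact (P.mem_Nb.1 this).2

lemma edgeFaces_subset_vF {v : P.Vertex} {e : P.Edge} (he : e ∈ P.vertexEdges v) :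
    P.edgeFaces e ⊆ P.vF v := by
  intro f hf
  exact P.mem_vF.2 ⟨e, he, hf⟩

lemma deg_le_choose (v : P.Vertex) :
    (P.vertexEdges v).card ≤ ((P.vF v).card).choose 2 := by
  have himg : (P.vertexEdges v).image P.edgeFaces ⊆ Finset.powersetCard 2 (P.vF v) := by
    intro s hs
    obtain ⟨e, he, rfl⟩ := Finset.mem_image.1 hs
    exact Finset.mem_powersetCard.2 ⟨P.edgeFaces_subset_vF he, P.edgeFaces_card e⟩
  calc (P.vertexEdges v).card = ((P.vertexEdges v).image P.edgeFaces).card :=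
        (Finset.card_image_of_injective _ P.edgeFaces_injective).symm
    _ ≤ (Finset.powersetCard 2 (P.vF v)).card := Finset.card_le_card himg
    _ = ((P.vF v).card).choose 2 := Finset.card_powersetCard 2 _

lemma three_le_vF (v : P.Vertex) : 3 ≤ (P.vF v).card := by
  by_contra h
  push_neg at h
  have h1 : ((P.vF v).card).choose 2 ≤ Nat.choose 2 2 :=
    Nat.choose_le_choose 2 (by omega)
  have := P.deg_le_choose v
  have := P.vertex_degree_ge_three v
  simp [Nat.choose] at h1
  omega

lemma four_le_vF {v : P.Vertex} (hd : 4 ≤ (P.vertexEdges v).card) : 4 ≤ (P.vF v).card := by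
  by_contra h
  push_neg at h
  have h1 : ((P.vF v).card).choose 2 ≤ Nat.choose 3 2 :=
    Nat.choose_le_choose 2 (by omega)
  have := P.deg_le_choose v
  simp [Nat.choose] at h1
  omega

lemma pair_edge {v : P.Vertex} (hd : (P.vertexEdges v).card = 3)
    (hn : (P.vF v).card = 3) {f g : P.Face} (hf : f ∈ P.vF v) (hg : g ∈ P.vF v)
    (hfg : f ≠ g) : P.Adj f g := by
  have himg : (P.vertexEdges v).image P.edgeFaces ⊆ Finset.powersetCard 2 (P.vF v) := by
    intro s hs
    obtain ⟨e, he, rfl⟩ := Finset.mem_image.1 hs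
    exact Finset.mem_powersetCard.2 ⟨P.edgeFaces_subset_vF he, P.edgeFaces_card e⟩
  have hcard : (Finset.powersetCard 2 (P.vF v)).card ≤
      ((P.vertexEdges v).image P.edgeFaces).card := by
    rw [Finset.card_image_of_injective _ P.edgeFaces_injective,
      Finset.card_powersetCard, hn, hd]
    norm_num [Nat.choose]
  have heq := Finset.eq_of_subset_of_card_le himg hcard
  have hmem : ({f, g} : Finset P.Face) ∈ (P.vertexEdges v).image P.edgeFaces := by
    rw [heq]
    refine Finset.mem_powersetCard.2 ⟨?_, Finset.card_pair hfg⟩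
    intro x hx
    rcases Finset.mem_insert.1 hx with rfl | hx
    · exact hf
    · rwa [Finset.mem_singleton.1 hx]
  obtain ⟨e, _, hef⟩ := Finset.mem_image.1 hmem
  refine ⟨e, ?_, ?_⟩
  · exact (P.edge_face_incidence e f).1 (by rw [hef]; simp)
  · exact (P.edge_face_incidence e g).1 (by rw [hef]; simp)


lemma quad_filter_card (hF : Fintype.card P.Face = 5) :
    (Finset.univ.filter fun f => (P.faceEdges f).card = 4).card
      = 2 * Fintype.card P.Edge - 15 ∧
    15 ≤ 2 * Fintype.card P.Edge := by
  have hsplit := Finset.sum_filter_add_sum_filter_not Finset.univ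
    (fun f => (P.faceEdges f).card = 4) (fun f => (P.faceEdges f).card)
  have h4 : ∑ f ∈ Finset.univ.filter (fun f => (P.faceEdges f).card = 4),
      (P.faceEdges f).card
      = 4 * (Finset.univ.filter fun f => (P.faceEdges f).card = 4).card := by
    rw [Finset.sum_congr rfl (fun f hf => (Finset.mem_filter.1 hf).2), Finset.sum_const,
      smul_eq_mul, mul_comm]
  have h3 : ∑ f ∈ Finset.univ.filter (fun f => ¬ (P.faceEdges f).card = 4),
      (P.faceEdges f).card
      = 3 * (Finset.univ.filter fun f => ¬ (P.faceEdges f).card = 4).card := by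
    rw [Finset.sum_congr rfl (fun f hf => ?_), Finset.sum_const, smul_eq_mul, mul_comm]
    have h1 := (Finset.mem_filter.1 hf).2
    have h2 := P.face_three_edges f
    have h5 := P.k_le_four hF f
    omega
  have hcards := Finset.card_filter_add_card_filter_not
    (s := (Finset.univ : Finset P.Face)) (p := fun f => (P.faceEdges f).card = 4)
  rw [Finset.card_univ, hF] at hcards
  rw [h4, h3, P.sum_faceEdges] at hsplit
  omega

lemma sum_vF_le (hF : Fintype.card P.Face = 5) :
    ∑ v, (P.vF v).card ≤ ∑ f, (P.faceEdges f).card := by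
  rw [← P.sum_uF_eq_sum_vF]
  refine Finset.sum_le_sum fun f _ => ?_
  rw [← P.faceVerts_card f]
  exact Finset.card_le_card (P.uF_subset f)

lemma deg_le_sub (v : P.Vertex) :
    (P.vertexEdges v).card
      ≤ 2 * Fintype.card P.Edge - 3 * (Fintype.card P.Vertex - 1) := by
  have h1 := Finset.sum_erase_add Finset.univ (fun v => (P.vertexEdges v).card)
    (Finset.mem_univ v)
  beta_reduce at h1
  rw [P.sum_deg] at h1
  have h2 : (Finset.univ.erase v).card • 3
      ≤ ∑ u ∈ Finset.univ.erase v, (P.vertexEdges u).card :=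
    Finset.card_nsmul_le_sum _ _ _ (fun u _ => P.vertex_degree_ge_three u)
  rw [Finset.card_erase_of_mem (Finset.mem_univ v), Finset.card_univ, smul_eq_mul] at h2
  omega

end CombPolyhedron

/-- A nondegenerate polyhedron with exactly five faces is combinatorially
equivalent to either a quadrilateral pyramid or a triangular prism. -/
theorem pentahedron_pyramid_or_prism (P : CombPolyhedron)
    (hF : Fintype.card P.Face = 5) :
    P.IsCombQuadPyramid ∨ P.IsCombTriangularPrism := by
  obtain ⟨hqc, h15⟩ := P.quad_filter_card hF
  have hV : (Fintype.card P.Vertex : ℤ) - Fintype.card P.Edge + 5 = 2 := by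
    have h := P.euler; rw [hF] at h; exact_mod_cast h
  have h3V : 3 * Fintype.card P.Vertex ≤ 2 * Fintype.card P.Edge := by
    have h2 : (Finset.univ : Finset P.Vertex).card • 3 ≤ ∑ v, (P.vertexEdges v).card :=
      Finset.card_nsmul_le_sum _ _ _ (fun v _ => P.vertex_degree_ge_three v)
    rw [P.sum_deg, Finset.card_univ, smul_eq_mul] at h2
    omega
  have hE : Fintype.card P.Edge = 8 ∨ Fintype.card P.Edge = 9 := by omega
  rcases hE with hE | hE
  · -- pyramid case
    left
    have hVc : Fintype.card P.Vertex = 5 := by omega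
    have hq1 : (Finset.univ.filter fun f => (P.faceEdges f).card = 4).card = 1 := by omega
    obtain ⟨b, hb⟩ := Finset.card_eq_one.1 hq1
    have hkb : (P.faceEdges b).card = 4 := by
      have hmem : b ∈ Finset.univ.filter fun f => (P.faceEdges f).card = 4 := by
        rw [hb]; exact Finset.mem_singleton_self b
      exact (Finset.mem_filter.1 hmem).2
    have htri : ∀ f, f ≠ b → (P.faceEdges f).card = 3 := by
      intro f hfb
      have h1 : f ∉ Finset.univ.filter fun f => (P.faceEdges f).card = 4 := by
        rw [hb]; simp [hfb]
      have h2 := P.face_three_edges f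
      have h3 := P.k_le_four hF f
      have h4 : ¬ (P.faceEdges f).card = 4 :=
        fun h => h1 (Finset.mem_filter.2 ⟨Finset.mem_univ f, h⟩)
      omega
    have hwex : ∃ w, w ∉ P.faceVerts b := by
      by_contra h
      push_neg at h
      have hs : (Finset.univ : Finset P.Vertex) ⊆ P.faceVerts b := fun w _ => h w
      have := Finset.card_le_card hs
      rw [Finset.card_univ, hVc, P.faceVerts_card, hkb] at this
      omega
    obtain ⟨w, hw⟩ := hwex
    have hbw : b ∉ P.vF w := fun h => hw (P.uF_subset b ((P.mem_uF_iff_mem_vF).2 h))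
    have hsub : P.vF w ⊆ Finset.univ.erase b := fun g hg =>
      Finset.mem_erase.2 ⟨fun h => hbw (h ▸ hg), Finset.mem_univ g⟩
    have herasecard : (Finset.univ.erase b).card = 4 := by
      rw [Finset.card_erase_of_mem (Finset.mem_univ b), Finset.card_univ, hF]
    have hmemfv : ∀ f ∈ P.vF w, w ∈ P.faceVerts f := fun f hf =>
      P.uF_subset f ((P.mem_uF_iff_mem_vF).2 hf)
    by_cases hdw : 4 ≤ (P.vertexEdges w).card
    · have h4n := P.four_le_vF hdw
      have heq : P.vF w = Finset.univ.erase b :=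
        Finset.eq_of_subset_of_card_le hsub (by rw [herasecard]; omega)
      refine ⟨hF, b, w, hkb, hw, fun f hf => ⟨htri f hf, hmemfv f ?_⟩⟩
      rw [heq]
      exact Finset.mem_erase.2 ⟨hf, Finset.mem_univ f⟩
    · exfalso
      push_neg at hdw
      have hdw3 : (P.vertexEdges w).card = 3 := by
        have := P.vertex_degree_ge_three w; omega
      have hsumn : ∑ v, (P.vF v).card ≤ 16 := by
        have h1 := P.sum_vF_le hF
        rw [P.sum_faceEdges, hE] at h1
        omega
      have hexa : ∃ a, 3 < (P.vertexEdges a).card := by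
        by_contra h
        push_neg at h
        have h1 : ∑ v, (P.vertexEdges v).card ≤ (Finset.univ : Finset P.Vertex).card • 3 :=
          Finset.sum_le_card_nsmul _ _ _ (fun v _ => h v)
        rw [P.sum_deg, hE, Finset.card_univ, hVc, smul_eq_mul] at h1
        omega
      obtain ⟨a, ha⟩ := hexa
      have haw : w ≠ a := fun h => by rw [← h, hdw3] at ha; omega
      have hnw : (P.vF w).card = 3 := by
        refine le_antisymm ?_ (P.three_le_vF w)
        by_contra h
        push_neg at h
        have hna : 4 ≤ (P.vF a).card := P.four_le_vF ha
        have hw_in : w ∈ Finset.univ.erase a :=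
          Finset.mem_erase.2 ⟨haw, Finset.mem_univ w⟩
        have e1 := Finset.sum_erase_add Finset.univ (fun v => (P.vF v).card)
          (Finset.mem_univ a)
        have e2 := Finset.sum_erase_add (Finset.univ.erase a) (fun v => (P.vF v).card) hw_in
        have e3 : ((Finset.univ.erase a).erase w).card • 3
            ≤ ∑ v ∈ (Finset.univ.erase a).erase w, (P.vF v).card :=
          Finset.card_nsmul_le_sum _ _ _ (fun v _ => P.three_le_vF v)
        have hc2 : ((Finset.univ.erase a).erase w).card = 3 := by
          rw [Finset.card_erase_of_mem hw_in, Finset.card_erase_of_mem (Finset.mem_univ a),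
            Finset.card_univ, hVc]
        beta_reduce at e1 e2
        rw [hc2, smul_eq_mul] at e3
        omega
      have ht4ex : ∃ t4 ∈ Finset.univ.erase b, t4 ∉ P.vF w := by
        by_contra h
        push_neg at h
        have hs : Finset.univ.erase b ⊆ P.vF w := fun x hx => h x hx
        have := Finset.card_le_card hs
        rw [herasecard, hnw] at this
        omega
      obtain ⟨t4, ht4e, ht4n⟩ := ht4ex
      have ht4b : t4 ≠ b := (Finset.mem_erase.1 ht4e).1
      have hNt : ∀ t ∈ P.vF w, P.Nb t = insert b ((P.vF w).erase t) := by
        intro t ht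
        have htb : t ≠ b := fun h => hbw (h ▸ ht)
        have hbnotin : b ∉ (P.vF w).erase t := fun h => hbw (Finset.mem_erase.1 h).2
        have hsub2 : insert b ((P.vF w).erase t) ⊆ P.Nb t := by
          intro x hx
          rcases Finset.mem_insert.1 hx with rfl | hx
          · exact P.mem_Nb.2 ⟨Ne.symm htb, P.adj_symm (P.adj_of_quad hF hkb htb)⟩
          · obtain ⟨hxt, hxw⟩ := Finset.mem_erase.1 hx
            exact P.mem_Nb.2 ⟨hxt, P.pair_edge hdw3 hnw ht hxw (Ne.symm hxt)⟩
        have hcard2 : (P.Nb t).card ≤ (insert b ((P.vF w).erase t)).card := by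
          rw [P.card_Nb, htri t htb, Finset.card_insert_of_notMem hbnotin,
            Finset.card_erase_of_mem ht, hnw]
        exact (Finset.eq_of_subset_of_card_le hsub2 hcard2).symm
      have huniv : ∀ x : P.Face, x = b ∨ x = t4 ∨ x ∈ P.vF w := by
        intro x
        by_contra h
        push_neg at h
        obtain ⟨h1, h2, h3⟩ := h
        have hbni : b ∉ insert t4 (P.vF w) := by
          intro hmem
          rcases Finset.mem_insert.1 hmem with h' | h'
          · exact ht4b h'.symm
          · exact hbw h'
        have hcard5 : (insert b (insert t4 (P.vF w))).card = 5 := by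
          rw [Finset.card_insert_of_notMem hbni, Finset.card_insert_of_notMem ht4n, hnw]
        have huniv' : insert b (insert t4 (P.vF w)) = Finset.univ :=
          Finset.eq_of_subset_of_card_le (Finset.subset_univ _)
            (by rw [Finset.card_univ, hF, hcard5])
        have hxmem : x ∈ insert b (insert t4 (P.vF w)) := by
          rw [huniv']; exact Finset.mem_univ x
        rcases Finset.mem_insert.1 hxmem with h' | h'
        · exact h1 h'
        · rcases Finset.mem_insert.1 h' with h'' | h''
          · exact h2 h''
          · exact h3 h''
      have hNb4card : (P.Nb t4).card = 3 := by rw [P.card_Nb, htri t4 ht4b]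
      have hex_t : ∃ t ∈ P.Nb t4, t ∈ P.vF w := by
        by_contra h
        push_neg at h
        have hsub1 : P.Nb t4 ⊆ {b} := by
          intro x hx
          have hxne := (P.mem_Nb.1 hx).1
          rcases huniv x with h' | h' | hxw
          · exact Finset.mem_singleton.2 h'
          · exact absurd h' hxne
          · exact absurd hxw (h x hx)
        have := Finset.card_le_card hsub1
        rw [hNb4card, Finset.card_singleton] at this
        omega
      obtain ⟨t, htN, htw⟩ := hex_t
      have hadj : P.Adj t4 t := (P.mem_Nb.1 htN).2
      have htne : t4 ≠ t := fun h => ht4n (h ▸ htw)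
      have ht4mem : t4 ∈ P.Nb t := P.mem_Nb.2 ⟨htne, P.adj_symm hadj⟩
      rw [hNt t htw] at ht4mem
      rcases Finset.mem_insert.1 ht4mem with h | h
      · exact ht4b h
      · exact ht4n (Finset.mem_erase.1 h).2
  · -- prism case
    right
    have hVc : Fintype.card P.Vertex = 6 := by omega
    have hd3 : ∀ v, (P.vertexEdges v).card = 3 := by
      intro v
      have h1 := P.deg_le_sub v
      rw [hE, hVc] at h1
      have := P.vertex_degree_ge_three v
      omega
    have hn3 : ∀ v, (P.vF v).card = 3 := by
      have hsumn_le : ∑ v, (P.vF v).card ≤ 18 := by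
        have h1 := P.sum_vF_le hF
        rw [P.sum_faceEdges, hE] at h1
        omega
      have hsumn_ge : (Finset.univ : Finset P.Vertex).card • 3 ≤ ∑ v, (P.vF v).card :=
        Finset.card_nsmul_le_sum _ _ _ (fun v _ => P.three_le_vF v)
      rw [Finset.card_univ, hVc, smul_eq_mul] at hsumn_ge
      have heq : ∑ _v : P.Vertex, (3 : ℕ) = ∑ v, (P.vF v).card := by
        rw [Finset.sum_const, Finset.card_univ, hVc, smul_eq_mul]
        omega
      intro v
      exact ((Finset.sum_eq_sum_iff_of_le (fun v _ => P.three_le_vF v)).1 heq v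
        (Finset.mem_univ v)).symm
    have huFeq : ∀ f, P.uF f = P.faceVerts f := by
      have hle : ∀ f ∈ (Finset.univ : Finset P.Face),
          (P.uF f).card ≤ (P.faceVerts f).card :=
        fun f _ => Finset.card_le_card (P.uF_subset f)
      have hsum_uF : ∑ f, (P.uF f).card = 18 := by
        rw [P.sum_uF_eq_sum_vF]
        rw [Finset.sum_congr rfl (fun v _ => hn3 v), Finset.sum_const, Finset.card_univ,
          hVc, smul_eq_mul]
      have hsum_fv : ∑ f, (P.faceVerts f).card = 18 := by
        rw [Finset.sum_congr rfl (fun f _ => P.faceVerts_card f), P.sum_faceEdges, hE]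
      have hkey := (Finset.sum_eq_sum_iff_of_le hle).1 (by rw [hsum_uF, hsum_fv])
      intro f
      exact Finset.eq_of_subset_of_card_le (P.uF_subset f)
        (le_of_eq (hkey f (Finset.mem_univ f)).symm)
    have htfc : (Finset.univ.filter fun f => (P.faceEdges f).card = 3).card = 2 := by
      have hcards := Finset.card_filter_add_card_filter_not
        (s := (Finset.univ : Finset P.Face)) (p := fun f => (P.faceEdges f).card = 4)
      rw [Finset.card_univ, hF] at hcards
      have hfe : (Finset.univ.filter fun f => (P.faceEdges f).card = 3)
          = Finset.univ.filter fun f => ¬ (P.faceEdges f).card = 4 := by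
        apply Finset.filter_congr
        intro f _
        have := P.face_three_edges f
        have := P.k_le_four hF f
        constructor
        · intro h; omega
        · intro h; omega
      rw [hfe]
      omega
    obtain ⟨t₁, t₂, hne, hts⟩ := Finset.card_eq_two.1 htfc
    have ht1mem : t₁ ∈ Finset.univ.filter fun f => (P.faceEdges f).card = 3 := by
      rw [hts]; simp
    have ht2mem : t₂ ∈ Finset.univ.filter fun f => (P.faceEdges f).card = 3 := by
      rw [hts]; simp
    have ht1 : (P.faceEdges t₁).card = 3 := (Finset.mem_filter.1 ht1mem).2
    have ht2 : (P.faceEdges t₂).card = 3 := (Finset.mem_filter.1 ht2mem).2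
    have hother : ∀ f, f ≠ t₁ → f ≠ t₂ → (P.faceEdges f).card = 4 := by
      intro f h1 h2
      have hnm : f ∉ Finset.univ.filter fun f => (P.faceEdges f).card = 3 := by
        rw [hts]; simp [h1, h2]
      have h3 := P.face_three_edges f
      have h4 := P.k_le_four hF f
      have h5 : ¬ (P.faceEdges f).card = 3 :=
        fun h => hnm (Finset.mem_filter.2 ⟨Finset.mem_univ f, h⟩)
      omega
    have hnadj : ¬ P.Adj t₁ t₂ := by
      intro hadj
      have hsubN : Finset.univ.erase t₁ ⊆ P.Nb t₁ := by
        intro x hx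
        obtain ⟨hxt1, -⟩ := Finset.mem_erase.1 hx
        by_cases hxt2 : x = t₂
        · subst hxt2
          exact P.mem_Nb.2 ⟨hxt1, hadj⟩
        · exact P.mem_Nb.2 ⟨hxt1,
            P.adj_symm (P.adj_of_quad hF (hother x hxt1 hxt2) (Ne.symm hxt1))⟩
      have := Finset.card_le_card hsubN
      rw [P.card_Nb, ht1, Finset.card_erase_of_mem (Finset.mem_univ t₁),
        Finset.card_univ, hF] at this
      omega
    refine ⟨hF, t₁, t₂, hne, ht1, ht2, ?_, hother⟩
    rw [Finset.disjoint_left]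
    intro v hv1 hv2
    rw [← huFeq] at hv1 hv2
    exact hnadj (P.pair_edge (hd3 v) (hn3 v) ((P.mem_uF_iff_mem_vF).1 hv1)
      ((P.mem_uF_iff_mem_vF).1 hv2) hne)

end Aux
end

section
/- In a combinatorial triangular prism ABC-DEF in R^3 (with triangular faces ABC and DEF and quadrilateral faces ABED, BCFE, CADF), the three lines AD, BE, CF are either mutually parallel or concurrent at a single point. -/
open Cardinal in
/-- Four coplanar points satisfy a nontrivial linear relation among difference vectors. -/
lemma coplanar_dep (P Q R S : EuclideanSpace ℝ (Fin 3))
    (h : Coplanar ℝ ({P, Q, R, S} : Set (EuclideanSpace ℝ (Fin 3)))) :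
    ∃ x y z : ℝ, ¬(x = 0 ∧ y = 0 ∧ z = 0) ∧
      x • (Q - P) + y • (R - P) + z • (S - P) = 0 := by
  by_contra hc
  have hP : P ∈ ({P, Q, R, S} : Set (EuclideanSpace ℝ (Fin 3))) := by simp
  have hQ : Q ∈ ({P, Q, R, S} : Set (EuclideanSpace ℝ (Fin 3))) := by simp
  have hR : R ∈ ({P, Q, R, S} : Set (EuclideanSpace ℝ (Fin 3))) := by simp
  have hS : S ∈ ({P, Q, R, S} : Set (EuclideanSpace ℝ (Fin 3))) := by simp
  set V := vectorSpan ℝ ({P, Q, R, S} : Set (EuclideanSpace ℝ (Fin 3)))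
  have hmQ : Q - P ∈ V := vsub_mem_vectorSpan ℝ hQ hP
  have hmR : R - P ∈ V := vsub_mem_vectorSpan ℝ hR hP
  have hmS : S - P ∈ V := vsub_mem_vectorSpan ℝ hS hP
  have hli : LinearIndependent ℝ
      (fun i : Fin 3 => (![⟨Q - P, hmQ⟩, ⟨R - P, hmR⟩, ⟨S - P, hmS⟩] i : V)) := by
    rw [Fintype.linearIndependent_iff]
    intro g hg i
    have hg' : g 0 • (Q - P) + g 1 • (R - P) + g 2 • (S - P) = 0 := by
      have := congrArg (Subtype.val) hg
      simpa [Fin.sum_univ_three, add_assoc] using this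
    by_contra hgi
    have h0 : ¬(g 0 = 0 ∧ g 1 = 0 ∧ g 2 = 0) := by
      fin_cases i <;> tauto
    exact hc ⟨g 0, g 1, g 2, h0, hg'⟩
  have h3 : (3 : Cardinal) ≤ Module.rank ℝ V := by
    simpa using hli.cardinal_le_rank
  have := h3.trans h
  norm_num at this

/-- Membership in the affine span of three points from a vector decomposition. -/
lemma mem_affineSpan_of_decomp (A B C P : EuclideanSpace ℝ (Fin 3)) (x y : ℝ)
    (h : P = y • (C - A) + (x • (B - A) + A)) :
    P ∈ affineSpan ℝ ({A, B, C} : Set (EuclideanSpace ℝ (Fin 3))) := by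
  have hA : A ∈ affineSpan ℝ ({A, B, C} : Set (EuclideanSpace ℝ (Fin 3))) :=
    subset_affineSpan ℝ _ (by simp)
  have hB : B ∈ affineSpan ℝ ({A, B, C} : Set (EuclideanSpace ℝ (Fin 3))) :=
    subset_affineSpan ℝ _ (by simp)
  have hC : C ∈ affineSpan ℝ ({A, B, C} : Set (EuclideanSpace ℝ (Fin 3))) :=
    subset_affineSpan ℝ _ (by simp)
  have h1 := (affineSpan ℝ ({A, B, C} : Set (EuclideanSpace ℝ (Fin 3)))).smul_vsub_vadd_mem
    x hB hA hA
  have h2 := (affineSpan ℝ ({A, B, C} : Set (EuclideanSpace ℝ (Fin 3)))).smul_vsub_vadd_mem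
    y hC hA h1
  rw [h]
  simpa [vsub_eq_sub, vadd_eq_add] using h2

lemma scale_cancel {y : ℝ} (hy : y ≠ 0) {p q : EuclideanSpace ℝ (Fin 3)}
    (h : y • p = y • q) : p = q :=
  smul_right_injective _ hy h

/-- In a combinatorial triangular prism `ABC-DEF` in ℝ³ (triangle `ABC`
nondegenerate, the vertices `D`, `E`, `F` of the other triangular face off the plane of
`ABC`, and the quadrilateral faces `ABED`, `BCFE`, `CADF` planar), the three lines
`AD`, `BE`, `CF` are either mutually parallel or concurrent at a single point. -/
theorem prism_lateral_lines_parallel_or_concurrent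
    (A B C D E F : EuclideanSpace ℝ (Fin 3))
    (hABC : ¬ Collinear ℝ ({A, B, C} : Set (EuclideanSpace ℝ (Fin 3))))
    (hD : D ∉ affineSpan ℝ ({A, B, C} : Set (EuclideanSpace ℝ (Fin 3))))
    (hE : E ∉ affineSpan ℝ ({A, B, C} : Set (EuclideanSpace ℝ (Fin 3))))
    (hF : F ∉ affineSpan ℝ ({A, B, C} : Set (EuclideanSpace ℝ (Fin 3))))
    (hq₁ : Coplanar ℝ ({A, B, E, D} : Set (EuclideanSpace ℝ (Fin 3))))
    (hq₂ : Coplanar ℝ ({B, C, F, E} : Set (EuclideanSpace ℝ (Fin 3))))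
    (hq₃ : Coplanar ℝ ({C, A, D, F} : Set (EuclideanSpace ℝ (Fin 3)))) :
    (∃ r s : ℝ, E - B = r • (D - A) ∧ F - C = s • (D - A)) ∨
      (∃ X : EuclideanSpace ℝ (Fin 3),
        Collinear ℝ ({A, D, X} : Set (EuclideanSpace ℝ (Fin 3))) ∧
        Collinear ℝ ({B, E, X} : Set (EuclideanSpace ℝ (Fin 3))) ∧
        Collinear ℝ ({C, F, X} : Set (EuclideanSpace ℝ (Fin 3)))) := by
  -- `B - A`, `C - A` are linearly independent.
  have hab : ∀ x y : ℝ, x • (B - A) + y • (C - A) = 0 → x = 0 ∧ y = 0 := by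
    intro x y hxy
    by_contra hcon
    apply hABC
    rw [collinear_iff_exists_forall_eq_smul_vadd]
    rcases eq_or_ne y 0 with hy | hy
    · have hx : x ≠ 0 := by tauto
      have hBA : B = A := by
        have hxa : x • (B - A) = 0 := by
          have : x • (B - A) + (0:ℝ) • (C - A) = 0 := by rw [← hy]; exact hxy
          simpa using this
        have := (smul_eq_zero.mp hxa).resolve_left hx
        exact sub_eq_zero.mp this
      have hCval : C = (1 : ℝ) • (C - A) +ᵥ A := by
        rw [vadd_eq_add, one_smul, sub_add_cancel]
      refine ⟨A, C - A, ?_⟩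
      intro p hp
      simp only [Set.mem_insert_iff, Set.mem_singleton_iff] at hp
      rcases hp with rfl | rfl | rfl
      · exact ⟨0, by simp⟩
      · exact ⟨0, by simp [hBA]⟩
      · exact ⟨1, hCval⟩
    · have hCval : C = (-x / y) • (B - A) +ᵥ A := by
        rw [vadd_eq_add]
        refine scale_cancel hy ?_
        have h1 : y • C = (-x) • (B - A) + y • A := by
          linear_combination (norm := module) hxy
        rw [h1]
        match_scalars <;> (try field_simp) <;> ring
      have hBval : B = (1 : ℝ) • (B - A) +ᵥ A := by
        rw [vadd_eq_add, one_smul, sub_add_cancel]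
      refine ⟨A, B - A, ?_⟩
      intro p hp
      simp only [Set.mem_insert_iff, Set.mem_singleton_iff] at hp
      rcases hp with rfl | rfl | rfl
      · exact ⟨0, by simp⟩
      · exact ⟨1, hBval⟩
      · exact ⟨-x / y, hCval⟩
  -- `B - A`, `C - A`, `D - A` are linearly independent.
  have habu : ∀ x y z : ℝ,
      x • (B - A) + y • (C - A) + z • (D - A) = 0 → x = 0 ∧ y = 0 ∧ z = 0 := by
    intro x y z hxyz
    rcases eq_or_ne z 0 with hz | hz
    · have : x • (B - A) + y • (C - A) = 0 := by
        rw [hz] at hxyz; simpa using hxyz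
      obtain ⟨hx, hy⟩ := hab x y this
      exact ⟨hx, hy, hz⟩
    · exfalso
      apply hD
      apply mem_affineSpan_of_decomp A B C D (-x / z) (-y / z)
      refine scale_cancel hz ?_
      have h1 : z • D = (-x) • (B - A) + (-y) • (C - A) + z • A := by
        linear_combination (norm := module) hxyz
      rw [h1]
      match_scalars <;> (try field_simp) <;> ring
  -- Express E - B in the basis.
  obtain ⟨x1, y1, z1, hn1, he1⟩ := coplanar_dep A B E D hq₁
  have hy1 : y1 ≠ 0 := by
    intro h0
    rw [h0] at he1
    obtain ⟨hx, -, hz⟩ := habu x1 0 z1 (by linear_combination (norm := module) he1)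
    exact hn1 ⟨hx, h0, hz⟩
  obtain ⟨al, hal_def⟩ : ∃ t : ℝ, t = -(x1 + y1) / y1 := ⟨_, rfl⟩
  obtain ⟨ga, hga_def⟩ : ∃ t : ℝ, t = -z1 / y1 := ⟨_, rfl⟩
  have hveq : E - B = al • (B - A) + ga • (D - A) := by
    refine scale_cancel hy1 ?_
    have h1 : y1 • (E - B) = (-(x1 + y1)) • (B - A) + (-z1) • (D - A) := by
      linear_combination (norm := module) he1
    rw [h1, hal_def, hga_def]
    match_scalars <;> (try field_simp) <;> ring
  have hga : ga ≠ 0 := by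
    intro h0
    apply hE
    apply mem_affineSpan_of_decomp A B C E (al + 1) 0
    rw [h0] at hveq
    linear_combination (norm := module) hveq
  -- Express F - C using C - B and E - B.
  obtain ⟨x2, y2, z2, hn2, he2⟩ := coplanar_dep B C F E hq₂
  have hy2 : y2 ≠ 0 := by
    intro h0
    rw [h0] at he2
    have hcomb : (z2 * al - x2) • (B - A) + x2 • (C - A) + (z2 * ga) • (D - A) = 0 := by
      linear_combination (norm := module) he2 - (z2 : ℝ) • hveq
    obtain ⟨h1, h2, h3⟩ := habu _ _ _ hcomb
    have hz2 : z2 = 0 := by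
      rcases mul_eq_zero.mp h3 with h | h
      · exact h
      · exact absurd h hga
    exact hn2 ⟨h2, h0, hz2⟩
  obtain ⟨la, hla_def⟩ : ∃ t : ℝ, t = -(x2 + y2) / y2 := ⟨_, rfl⟩
  obtain ⟨mu, hmu_def⟩ : ∃ t : ℝ, t = -z2 / y2 := ⟨_, rfl⟩
  have hweq : F - C = la • (C - B) + mu • (E - B) := by
    refine scale_cancel hy2 ?_
    have h1 : y2 • (F - C) = (-(x2 + y2)) • (C - B) + (-z2) • (E - B) := by
      linear_combination (norm := module) he2
    rw [h1, hla_def, hmu_def]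
    match_scalars <;> (try field_simp) <;> ring
  -- Third coplanarity gives la = mu * al.
  obtain ⟨x3, y3, z3, hn3, he3⟩ := coplanar_dep C A D F hq₃
  have key : (z3 * (mu * al - la)) • (B - A) + (z3 * la - x3 - y3) • (C - A)
      + (y3 + z3 * mu * ga) • (D - A) = 0 := by
    linear_combination (norm := module) he3 - (z3 : ℝ) • hweq - (z3 * mu : ℝ) • hveq
  obtain ⟨k1, k2, k3⟩ := habu _ _ _ key
  have hz3 : z3 ≠ 0 := by
    intro h0
    rw [h0] at k2 k3
    have hy3 : y3 = 0 := by simpa using k3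
    have hx3 : x3 = 0 := by rw [hy3] at k2; simpa using k2.symm
    exact hn3 ⟨hx3, hy3, h0⟩
  have hlam : la = mu * al := by
    have := (mul_eq_zero.mp k1).resolve_left hz3
    linarith [this]
  have hmu : mu ≠ 0 := by
    intro h0
    apply hF
    have hFC : F = C := by
      have : F - C = 0 := by
        rw [hweq, hlam, h0]; simp
      exact sub_eq_zero.mp this
    rw [hFC]
    exact subset_affineSpan ℝ _ (by simp)
  rw [hlam] at hweq
  have hweq2 : F - C = (mu * al) • (C - A) + (mu * ga) • (D - A) := by
    linear_combination (norm := module) hweq + (mu : ℝ) • hveq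
  -- Case split.
  rcases eq_or_ne al 0 with h0 | hal
  · left
    refine ⟨ga, mu * ga, ?_, ?_⟩
    · rw [hveq, h0]; module
    · rw [hweq2, h0]; module
  · right
    have hE_expr : E = al • (B - A) + ga • (D - A) + B := by
      linear_combination (norm := module) hveq
    have hF_expr : F = (mu * al) • (C - A) + (mu * ga) • (D - A) + C := by
      linear_combination (norm := module) hweq2
    set X : EuclideanSpace ℝ (Fin 3) := (-(ga / al)) • (D - A) + A with hX_def
    have hXeq1 : X = (-(ga / al)) • (D - A) +ᵥ A := by rw [vadd_eq_add]
    have hDeq : D = (1 : ℝ) • (D - A) +ᵥ A := by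
      rw [vadd_eq_add, one_smul, sub_add_cancel]
    have hXeq2 : X = (0 : ℝ) • (E - B) +ᵥ X := by rw [zero_smul, zero_vadd]
    have hXeq3 : X = (0 : ℝ) • (F - C) +ᵥ X := by rw [zero_smul, zero_vadd]
    have hBeq : B = (1 / al) • (E - B) +ᵥ X := by
      rw [vadd_eq_add, hX_def, hE_expr]
      match_scalars <;> (try field_simp) <;> ring
    have hEeq : E = (1 + 1 / al) • (E - B) +ᵥ X := by
      rw [vadd_eq_add, hX_def, hE_expr]
      match_scalars <;> (try field_simp) <;> ring
    have hCeq : C = (1 / (mu * al)) • (F - C) +ᵥ X := by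
      rw [vadd_eq_add, hX_def, hF_expr]
      match_scalars <;> (try field_simp) <;> ring
    have hFeq : F = (1 + 1 / (mu * al)) • (F - C) +ᵥ X := by
      rw [vadd_eq_add, hX_def, hF_expr]
      match_scalars <;> (try field_simp) <;> ring
    refine ⟨X, ?_, ?_, ?_⟩
    · rw [collinear_iff_exists_forall_eq_smul_vadd]
      refine ⟨A, D - A, ?_⟩
      intro p hp
      simp only [Set.mem_insert_iff, Set.mem_singleton_iff] at hp
      rcases hp with rfl | rfl | rfl
      · exact ⟨0, by simp⟩
      · exact ⟨1, hDeq⟩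
      · exact ⟨-(ga / al), hXeq1⟩
    · rw [collinear_iff_exists_forall_eq_smul_vadd]
      refine ⟨X, E - B, ?_⟩
      intro p hp
      simp only [Set.mem_insert_iff, Set.mem_singleton_iff] at hp
      rcases hp with rfl | rfl | rfl
      · exact ⟨1 / al, hBeq⟩
      · exact ⟨1 + 1 / al, hEeq⟩
      · exact ⟨0, hXeq2⟩
    · rw [collinear_iff_exists_forall_eq_smul_vadd]
      refine ⟨X, F - C, ?_⟩
      intro p hp
      simp only [Set.mem_insert_iff, Set.mem_singleton_iff] at hp
      rcases hp with rfl | rfl | rfl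
      · exact ⟨1 / (mu * al), hCeq⟩
      · exact ⟨1 + 1 / (mu * al), hFeq⟩
      · exact ⟨0, hXeq3⟩
end

section
/- Let P be a pyramid with apex V over a planar polygonal base with area S and perimeter p, and let h be the distance from V to the base plane. Then the total area of the lateral (side) faces of P is at least (1/2)·√((2S)² + p²h²). -/
/-! Writing `B` for the foot of the perpendicular from the apex `V`, the doubled area of the lateral
face `V Aᵢ Aᵢ₊₁` is the length of the planar vector `(cᵢ, h aᵢ)`, where `aᵢ = |Aᵢ Aᵢ₊₁|` and
`cᵢ = (Aᵢ - B) × (Aᵢ₊₁ - B)` is the signed doubled area of the triangle `B Aᵢ Aᵢ₊₁`.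
The `cᵢ` sum to the shoelace sum `± 2S` (it does not depend on the choice of `B`) and the `aᵢ`
to `p`, so the triangle inequality in `ℝ²` bounds the total lateral area by `½ √((2S)² + (ph)²)`. -/

noncomputable def norm3 (v : Fin 3 → ℝ) : ℝ := Real.sqrt (v 0 ^ 2 + v 1 ^ 2 + v 2 ^ 2)

noncomputable def triArea (P Q R : Fin 3 → ℝ) : ℝ :=
  norm3 (crossProduct (Q - P) (R - P)) / 2

def cross2 (u v : Fin 3 → ℝ) : ℝ := u 0 * v 1 - u 1 * v 0

theorem Real.sqrt_sq_sum_add_sq_sum_le {ι : Type*} (s : Finset ι) (f g : ι → ℝ) :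
    √((∑ i ∈ s, f i) ^ 2 + (∑ i ∈ s, g i) ^ 2) ≤ ∑ i ∈ s, √(f i ^ 2 + g i ^ 2) := by
  have hnorm (a b : ℝ) : ‖!₂[a, b]‖ = √(a ^ 2 + b ^ 2) := by
    simp [EuclideanSpace.norm_eq, Fin.sum_univ_two, sq_abs]
  have hsum : ∑ i ∈ s, !₂[f i, g i] = !₂[∑ i ∈ s, f i, ∑ i ∈ s, g i] := by
    ext j
    fin_cases j <;> simp [WithLp.ofLp_sum, Finset.sum_apply]
  simpa only [hsum, hnorm] using norm_sum_le s fun i => !₂[f i, g i]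

theorem norm3_sq_sub_of_apply_two_eq {P Q : Fin 3 → ℝ} (hPQ : P 2 = Q 2) :
    norm3 (Q - P) ^ 2 = (Q 0 - P 0) ^ 2 + (Q 1 - P 1) ^ 2 := by
  rw [norm3, Real.sq_sqrt (by positivity)]
  simp [hPQ]

theorem triArea_eq_of_apply_two_eq_zero (V : Fin 3 → ℝ) {P Q : Fin 3 → ℝ}
    (hP : P 2 = 0) (hQ : Q 2 = 0) :
    triArea V P Q = √(cross2 (P - V) (Q - V) ^ 2 + (|V 2| * norm3 (Q - P)) ^ 2) / 2 := by
  rw [triArea, norm3, mul_pow, sq_abs, norm3_sq_sub_of_apply_two_eq (hP.trans hQ.symm), cross2,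
    cross_apply]
  simp only [Pi.sub_apply, hP, hQ, Matrix.cons_val_zero, Matrix.cons_val_one, Matrix.cons_val_two,
    Matrix.head_cons, Matrix.tail_cons]
  congr 2
  ring

theorem Fintype.sum_comp_add_right {G M : Type*} [AddGroup G] [Fintype G] [AddCommMonoid M]
    (g : G → M) (a : G) : ∑ i, g (i + a) = ∑ i, g i :=
  Equiv.sum_comp (Equiv.addRight a) g

theorem sum_cross2_sub_cyclic {m : ℕ} [NeZero m] (A : Fin m → Fin 3 → ℝ) (V : Fin 3 → ℝ) :
    ∑ i, cross2 (A i - V) (A (i + 1) - V) = ∑ i, cross2 (A i) (A (i + 1)) := by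
  have hterm (i : Fin m) : cross2 (A i - V) (A (i + 1) - V) = cross2 (A i) (A (i + 1))
      + (V 1 * A (i + 1) 0 - V 1 * A i 0) + (V 0 * A i 1 - V 0 * A (i + 1) 1) := by
    simp only [cross2, Pi.sub_apply]
    ring
  simp only [hterm, Finset.sum_add_distrib, Finset.sum_sub_distrib,
    Fintype.sum_comp_add_right (fun i => V 1 * A i 0),
    Fintype.sum_comp_add_right (fun i => V 0 * A i 1)]
  ring

/-- For a pyramid with apex `V` over a planar polygonal base
`A 0, A 1, …` (placed in the plane `z = 0`) with area `S` (shoelace formula),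
perimeter `p`, and apex at distance `h` from the base plane, the total area of the
lateral faces is at least `(1/2)·√((2S)² + p²h²)`. -/
theorem pyramid_lateral_area_lower_bound (n : ℕ) (A : Fin (n + 3) → Fin 3 → ℝ)
    (V : Fin 3 → ℝ) (hbase : ∀ i, A i 2 = 0)
    (h S p : ℝ) (hh : h = |V 2|)
    (hS : S = |∑ i, (A i 0 * A (i + 1) 1 - A (i + 1) 0 * A i 1)| / 2)
    (hp : p = ∑ i, norm3 (A (i + 1) - A i)) :
    (1 / 2) * Real.sqrt ((2 * S) ^ 2 + p ^ 2 * h ^ 2) ≤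
      ∑ i, triArea V (A i) (A (i + 1)) := by
  have hS' : (2 * S) ^ 2 = (∑ i, cross2 (A i - V) (A (i + 1) - V)) ^ 2 := by
    rw [sum_cross2_sub_cyclic, hS, mul_div_cancel₀ _ two_ne_zero, sq_abs]
    simp only [cross2, mul_comm (A _ 1)]
  have hph : p ^ 2 * h ^ 2 = (∑ i, h * norm3 (A (i + 1) - A i)) ^ 2 := by
    rw [← Finset.mul_sum, hp]
    ring
  calc (1 / 2) * √((2 * S) ^ 2 + p ^ 2 * h ^ 2)
      ≤ (1 / 2) * ∑ i, √(cross2 (A i - V) (A (i + 1) - V) ^ 2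
          + (h * norm3 (A (i + 1) - A i)) ^ 2) := by
        rw [hS', hph]
        gcongr
        exact Real.sqrt_sq_sum_add_sq_sum_le _ _ _
    _ = ∑ i, triArea V (A i) (A (i + 1)) := by
        rw [Finset.mul_sum]
        refine Finset.sum_congr rfl fun i _ => ?_
        rw [triArea_eq_of_apply_two_eq_zero V (hbase _) (hbase _), hh]
        ring
end

section
/- The unit-volume right equilateral-triangular prism circumscribed about a sphere has base edge length 4^(1/3), height 4^(1/3)·3^(-1/2), and surface area 2^(1/3)·3^(3/2); moreover 2^(1/3)·3^(3/2) < 2^(5/3)·3^(2/3), so this prism has strictly less surface area than any unit-volume quadrilateral pyramid. -/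
/-- The unit-volume right equilateral-triangular prism circumscribed
about a sphere (height equal to the diameter of the base's incircle, `h = s/√3`) has
base edge length `4^(1/3)`, height `4^(1/3)·3^(-1/2)`, and surface area
`2·(√3/4)s² + 3sh = 2^(1/3)·3^(3/2)`; moreover `2^(1/3)·3^(3/2) < 2^(5/3)·3^(2/3)`,
so this prism has strictly less surface area than any unit-volume quadrilateral
pyramid (whose surface area is at least `2^(5/3)·3^(2/3)`). -/
theorem triangular_prism_beats_quad_pyramid (s hgt : ℝ)
    (hs : s = (4 : ℝ) ^ ((1 : ℝ) / 3)) (hh : hgt = s / Real.sqrt 3) :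
    hgt = (4 : ℝ) ^ ((1 : ℝ) / 3) * 3 ^ (-(1 : ℝ) / 2) ∧
      Real.sqrt 3 / 4 * s ^ 2 * hgt = 1 ∧
      2 * (Real.sqrt 3 / 4 * s ^ 2) + 3 * s * hgt =
        (2 : ℝ) ^ ((1 : ℝ) / 3) * 3 ^ ((3 : ℝ) / 2) ∧
      (2 : ℝ) ^ ((1 : ℝ) / 3) * 3 ^ ((3 : ℝ) / 2) <
        (2 : ℝ) ^ ((5 : ℝ) / 3) * 3 ^ ((2 : ℝ) / 3) := by
  subst hs hh
  set A : ℝ := (4 : ℝ) ^ ((1 : ℝ) / 3) with hAdef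
  set C : ℝ := (2 : ℝ) ^ ((1 : ℝ) / 3) with hCdef
  have hA3 : A ^ 3 = 4 := by
    rw [hAdef, ← Real.rpow_natCast (((4:ℝ))^((1:ℝ)/3)) 3, ← Real.rpow_mul (by norm_num)]
    norm_num
  have hC3 : C ^ 3 = 2 := by
    rw [hCdef, ← Real.rpow_natCast (((2:ℝ))^((1:ℝ)/3)) 3, ← Real.rpow_mul (by norm_num)]
    norm_num
  have hAC : A = C ^ 2 := by
    rw [hAdef, hCdef, ← Real.rpow_natCast (((2:ℝ))^((1:ℝ)/3)) 2, ← Real.rpow_mul (by norm_num),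
      show (4:ℝ) = (2:ℝ)^(2:ℕ) by norm_num, ← Real.rpow_natCast (2:ℝ) 2,
      ← Real.rpow_mul (by norm_num)]
    norm_num
  have hB0 : (0:ℝ) < Real.sqrt 3 := Real.sqrt_pos.2 (by norm_num)
  have hB2 : Real.sqrt 3 ^ 2 = 3 := Real.sq_sqrt (by norm_num)
  have h32 : (3:ℝ) ^ ((3:ℝ)/2) = 3 * Real.sqrt 3 := by
    rw [Real.sqrt_eq_rpow, show (3:ℝ)/2 = 1 + 1/2 by norm_num,
      Real.rpow_add (by norm_num), Real.rpow_one]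
  have hneg : (3:ℝ) ^ (-(1:ℝ)/2) = 1 / Real.sqrt 3 := by
    rw [Real.sqrt_eq_rpow, neg_div, Real.rpow_neg (by norm_num)]
    exact (one_div _).symm
  refine ⟨by rw [hneg]; ring, ?_, ?_, ?_⟩
  · field_simp
    nlinarith [hA3, hB0, hB2]
  · rw [hAC, h32]
    field_simp
    linear_combination ((2:ℝ)*C^4 - 12*C) * hB2 + 18*C*hC3
  · have h2 : (0:ℝ) ≤ (2:ℝ)^((4:ℝ)/3) := Real.rpow_nonneg (by norm_num) _
    have key : ((3:ℝ)^((5:ℝ)/6)) < (2:ℝ)^((4:ℝ)/3) := by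
      have h6 : ((3:ℝ)^((5:ℝ)/6))^(6:ℕ) < ((2:ℝ)^((4:ℝ)/3))^(6:ℕ) := by
        rw [← Real.rpow_natCast ((3:ℝ)^((5:ℝ)/6)) 6, ← Real.rpow_natCast ((2:ℝ)^((4:ℝ)/3)) 6,
          ← Real.rpow_mul (by norm_num), ← Real.rpow_mul (by norm_num)]
        norm_num
      exact lt_of_pow_lt_pow_left₀ 6 h2 h6
    calc (2:ℝ)^((1:ℝ)/3) * 3^((3:ℝ)/2)
        = (2:ℝ)^((1:ℝ)/3) * 3^((2:ℝ)/3) * 3^((5:ℝ)/6) := by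
          rw [mul_assoc, ← Real.rpow_add (by norm_num)]; norm_num
      _ < (2:ℝ)^((1:ℝ)/3) * 3^((2:ℝ)/3) * 2^((4:ℝ)/3) := by
          apply mul_lt_mul_of_pos_left key
          positivity
      _ = (2:ℝ)^((5:ℝ)/3) * 3^((2:ℝ)/3) := by
          rw [mul_comm ((2:ℝ)^((1:ℝ)/3)) _, mul_assoc, ← Real.rpow_add (by norm_num)]
          ring_nf
end
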